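/- arXiv:math/0408201 — 4 statements merged into one kernel-verified Lean document; each statement's English description precedes it below -/
import Mathlib

section
/- Let z ∈ {0,1}^ℤ satisfy liminf_{n→−∞} H̃_n(z) = −∞ and let a ∈ {1,…,m}^ℤ. Then the sequence F(z,a) ∈ Σ^ℤ defined by placing α_{a_{γ_n(z)}} at position n when z_n = 1, and β_{a_{γ_k(z)}} at position n when z_n = 0 where k = ε_n(z) is the matching position, belongs to the two-sided Dyck shift X. -/
open scoped BigOperators

/-- Dyck alphabet: `Sum.inl i` is the opening bracket `α i`, `Sum.inr i` the closing `β i`. -/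
abbrev DA (m : ℕ) := Fin m ⊕ Fin m

/-- Sign of a letter: `+1` for an `α`, `-1` for a `β`. -/
def daSgn {m : ℕ} : DA m → ℤ := fun w => match w with | .inl _ => 1 | .inr _ => -1

/-- The defining relations of the Dyck monoid (with zero): `α j · β j = 1`, `α i · β j = 0` (i ≠ j). -/
def dyckRel (m : ℕ) : WithZero (FreeMonoid (DA m)) → WithZero (FreeMonoid (DA m)) → Prop :=
  fun x y =>
    (∃ j : Fin m, x = ((FreeMonoid.of (Sum.inl j) * FreeMonoid.of (Sum.inr j) : FreeMonoid (DA m)) :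
        WithZero (FreeMonoid (DA m))) ∧ y = 1) ∨
    (∃ i j : Fin m, i ≠ j ∧ x = ((FreeMonoid.of (Sum.inl i) * FreeMonoid.of (Sum.inr j) : FreeMonoid (DA m)) :
        WithZero (FreeMonoid (DA m))) ∧ y = 0)

/-- The congruence on the free monoid with zero generated by the Dyck relations;
the Dyck monoid `M` is the corresponding quotient. -/
def dyckCon (m : ℕ) : Con (WithZero (FreeMonoid (DA m))) := conGen (dyckRel m)

/-- Image of a word in the free monoid with zero. -/
def wordVal {m : ℕ} (w : List (DA m)) : WithZero (FreeMonoid (DA m)) :=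
  ((FreeMonoid.ofList w : FreeMonoid (DA m)) : WithZero (FreeMonoid (DA m)))

/-- Two words are equivalent mod the Dyck monoid `M`. -/
def DyckEquiv {m : ℕ} (w w' : List (DA m)) : Prop := dyckCon m (wordVal w) (wordVal w')

/-- A word is admissible (belongs to the Dyck language): nonzero in `M`. -/
def IsNonzeroWord {m : ℕ} (w : List (DA m)) : Prop := ¬ dyckCon m (wordVal w) 0

/-- A word is balanced: equal to the identity in `M`. -/
def IsBalancedWord {m : ℕ} (w : List (DA m)) : Prop := dyckCon m (wordVal w) 1

/-- The finite subword `x_{[a,b]}` of a bi-infinite sequence. -/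
def wordOf {m : ℕ} (x : ℤ → DA m) (a b : ℤ) : List (DA m) :=
  (List.range (b + 1 - a).toNat).map (fun i => x (a + i))

/-- Membership in the two-sided `m`-Dyck shift. -/
def InDyckShift {m : ℕ} (x : ℤ → DA m) : Prop :=
  ∀ a b : ℤ, a ≤ b → IsNonzeroWord (wordOf x a b)

/-- The height cocycle generated by a sign function `s`:
`H_i = Σ_{j=0}^{i-1} s(x_j)` for `i ≥ 0`, `H_i = -Σ_{j=i}^{-1} s(x_j)` for `i < 0`. -/
def cocycle {γ : Type*} (s : γ → ℤ) (x : ℤ → γ) (i : ℤ) : ℤ :=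
  if 0 ≤ i then ∑ j ∈ Finset.range i.toNat, s (x j)
  else - ∑ j ∈ Finset.range (-i).toNat, s (x (i + j))

/-- The height cocycle `H` of the Dyck shift. -/
def Hc {m : ℕ} (x : ℤ → DA m) : ℤ → ℤ := cocycle daSgn x

/-- The double-tail (homoclinic) relation: the two sequences agree outside a finite window. -/
def DoubleTail {γ : Type*} (x y : ℤ → γ) : Prop :=
  ∃ n : ℤ, ∀ k : ℤ, n < |k| → x k = y k

/-- The cylinder set `[w]_k`. -/
def cylSet {m : ℕ} (w : List (DA m)) (k : ℤ) : Set (ℤ → DA m) :=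
  {x | ∀ i : Fin w.length, x (k + (i : ℕ)) = w.get i}

/-- Sign of a bit: `+1` for `1` (= `true`), `-1` for `0` (= `false`). -/
def bSgn : Bool → ℤ := fun b => if b then 1 else -1

/-- The random-walk cocycle `H̃` on `{0,1}^ℤ`. -/
def Hz (z : ℤ → Bool) : ℤ → ℤ := cocycle bSgn z

/-- `γ_k(z) = Σ_{i=0}^{k} z_i` for `k ≥ 0`, `γ_k(z) = -Σ_{i=k}^{-1} z_i` for `k < 0`. -/
def gam (z : ℤ → Bool) (k : ℤ) : ℤ :=
  if 0 ≤ k then ∑ i ∈ Finset.range (k.toNat + 1), (if z (i : ℕ) then (1 : ℤ) else 0)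
  else - ∑ i ∈ Finset.range (-k).toNat, (if z (k + i) then (1 : ℤ) else 0)


/-- stack action -/
def act {m : ℕ} : DA m → Option (ℕ → Fin m) → Option (ℕ → Fin m)
  | .inl i, o => o.bind (fun f => if f 0 = i then some (fun k => f (k+1)) else none)
  | .inr j, o => o.map (fun f k => match k with | 0 => j | k+1 => f k)

lemma act_none {m : ℕ} (l : DA m) : act l none = none := by cases l <;> rfl

def phiF (m : ℕ) : FreeMonoid (DA m) →* Function.End (Option (ℕ → Fin m)) :=
  FreeMonoid.lift (fun l => (act l : Function.End _))

lemma phiF_ofList {m : ℕ} (l : List (DA m)) (o : Option (ℕ → Fin m)) :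
    phiF m (FreeMonoid.ofList l) o = l.foldr act o := by
  induction l with
  | nil => simp [phiF]; rfl
  | cons hd tl ih =>
      have h1 : FreeMonoid.ofList (hd :: tl) = FreeMonoid.of hd * FreeMonoid.ofList tl := rfl
      rw [h1, map_mul]
      show phiF m (FreeMonoid.of hd) (phiF m (FreeMonoid.ofList tl) o) = _
      rw [ih]
      simp [phiF, FreeMonoid.lift_eval_of]
      rfl

lemma phiF_none {m : ℕ} (w : FreeMonoid (DA m)) : phiF m w none = none := by
  have := phiF_ofList (m := m) w.toList none
  rw [FreeMonoid.ofList_toList] at this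
  rw [this]
  induction w.toList with
  | nil => rfl
  | cons hd tl ih => simp [List.foldr, ih, act_none]

def psiF (m : ℕ) : WithZero (FreeMonoid (DA m)) →* Function.End (Option (ℕ → Fin m)) where
  toFun := fun x => Option.elim x (fun _ => none) (fun w => phiF m w)
  map_one' := by
    show phiF m 1 = 1
    simp [map_one]
  map_mul' := by
    intro x y
    induction x using WithZero.recZeroCoe with
    | zero =>
        rw [zero_mul]
        funext o
        rfl
    | coe w =>
        induction y using WithZero.recZeroCoe with
        | zero =>
            rw [mul_zero]
            funext o
            show (none : Option (ℕ → Fin m)) = phiF m w ((fun _ => none : Option (ℕ → Fin m) → Option (ℕ → Fin m)) o)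
            exact (phiF_none w).symm
        | coe v =>
            rw [← WithZero.coe_mul]
            show phiF m (w * v) = phiF m w * phiF m v
            rw [map_mul]

lemma psiF_coe {m : ℕ} (w : FreeMonoid (DA m)) : psiF m (w : WithZero (FreeMonoid (DA m))) = phiF m w := rfl

lemma psiF_word {m : ℕ} (w : List (DA m)) : psiF m (wordVal w) = phiF m (FreeMonoid.ofList w) := rfl

lemma psiF_pair {m : ℕ} (i j : Fin m) (o : Option (ℕ → Fin m)) :
    psiF m ((FreeMonoid.of (Sum.inl i) * FreeMonoid.of (Sum.inr j) : FreeMonoid (DA m)) :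
        WithZero (FreeMonoid (DA m))) o = act (Sum.inl i) (act (Sum.inr j) o) := by
  rw [psiF_coe, map_mul]
  show phiF m (FreeMonoid.of (Sum.inl i)) (phiF m (FreeMonoid.of (Sum.inr j)) o) = _
  simp [phiF, FreeMonoid.lift_eval_of]
  rfl

lemma dyckCon_le_ker (m : ℕ) : dyckCon m ≤ Con.ker (psiF m) := by
  apply Con.conGen_le.mpr
  rintro x y (⟨j, rfl, rfl⟩ | ⟨i, j, hij, rfl, rfl⟩) <;> rw [Con.ker_rel] <;> funext o
  · rw [psiF_pair]
    show _ = (1 : Function.End (Option (ℕ → Fin m))) o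
    cases o with
    | none => rfl
    | some f =>
        show act (Sum.inl j) (some _) = some f
        simp only [act, Option.bind]
        simp
  · rw [psiF_pair]
    show _ = (none : Option (ℕ → Fin m))
    cases o with
    | none => rfl
    | some f =>
        show act (Sum.inl i) (some _) = none
        simp only [act, Option.bind]
        simp [Ne.symm hij]

lemma cocycle_step {γ : Type*} (s : γ → ℤ) (x : ℤ → γ) (n : ℤ) :
    cocycle s x (n+1) = cocycle s x n + s (x n) := by
  unfold cocycle
  rcases lt_trichotomy n (-1) with h | h | h
  · rw [if_neg (show ¬ (0 ≤ n + 1) by omega), if_neg (show ¬ (0 ≤ n) by omega)]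
    have hK : (-n).toNat = (-(n+1)).toNat + 1 := by omega
    rw [hK, Finset.sum_range_succ']
    simp only [Nat.cast_add, Nat.cast_one, Nat.cast_zero]
    have : ∀ j ∈ Finset.range (-(n+1)).toNat, s (x (n + (↑j + 1))) = s (x (n + 1 + ↑j)) := by
      intro j _
      congr 1
      ring_nf
    rw [Finset.sum_congr rfl this]
    rw [add_zero]
    ring
  · subst h
    rw [if_pos (show (0 : ℤ) ≤ -1 + 1 by omega), if_neg (show ¬ ((0 : ℤ) ≤ -1) by omega)]
    norm_num
  · rw [if_pos (by omega), if_pos (by omega)]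
    have hK : (n+1).toNat = n.toNat + 1 := by omega
    rw [hK, Finset.sum_range_succ]
    have : ((n.toNat : ℕ) : ℤ) = n := by omega
    rw [this]

/-- if `liminf_{n→−∞} H̃_n(z) = −∞`, then the sequence `F(z,a)`, which places
`α_{a_{γ_n(z)}}` at position `n` when `z_n = 1` and `β_{a_{γ_{ε_n(z)}(z)}}` when `z_n = 0`
(with `ε_n(z) = max{l < n : H̃_l(z) ≤ H̃_{n+1}(z)}`), lies in the two-sided Dyck shift. -/
theorem coding_map_lands_in_dyck_shift (m : ℕ) (hm : 2 ≤ m) (z : ℤ → Bool)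
    (hz : Filter.liminf (fun n : ℤ => ((Hz z n : ℝ) : EReal)) Filter.atBot = ⊥)
    (a : ℤ → Fin m) (eps : ℤ → ℤ)
    (heps : ∀ n : ℤ, IsGreatest {l : ℤ | l < n ∧ Hz z l ≤ Hz z (n + 1)} (eps n))
    (x : ℤ → DA m)
    (hx : ∀ n : ℤ, x n = if z n then Sum.inl (a (gam z n)) else Sum.inr (a (gam z (eps n)))) :
    InDyckShift x := by
  -- Heights are unbounded below on the left
  have hunb : ∀ (n c : ℤ), ∃ l, l < n ∧ Hz z l ≤ c := by
    intro n c
    by_contra hcon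
    push_neg at hcon
    have hev : (((c : ℝ)) : EReal) ∈ {e : EReal | ∀ᶠ k in Filter.atBot, e ≤ ((Hz z k : ℝ) : EReal)} := by
      rw [Set.mem_setOf_eq, Filter.eventually_atBot]
      refine ⟨n - 1, fun k hk => ?_⟩
      have h1 : c < Hz z k := hcon k (by omega)
      have h2 : (c : ℝ) ≤ (Hz z k : ℝ) := by exact_mod_cast h1.le
      exact_mod_cast h2
    have hle := le_sSup hev
    rw [← Filter.liminf_eq, hz] at hle
    exact EReal.coe_ne_bot _ (le_bot_iff.mp hle)
  have hgt : ∀ (n c : ℤ), ∃ l, IsGreatest {l : ℤ | l < n ∧ Hz z l ≤ c} l := by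
    intro n c
    obtain ⟨ub, hub1, hub2⟩ := Int.exists_greatest_of_bdd
      (P := fun l => l < n ∧ Hz z l ≤ c) ⟨n, fun l hl => hl.1.le⟩ (hunb n c)
    exact ⟨ub, hub1, fun l hl => hub2 l hl⟩
  choose D hD using hgt
  have hH : ∀ n : ℤ, Hz z (n + 1) = Hz z n + bSgn (z n) := fun n => cocycle_step bSgn z n
  have hDshift : ∀ (n c : ℤ), c < Hz z n → D (n + 1) c = D n c := by
    intro n c hc
    have h1 := hD (n + 1) c
    have hmem : D (n + 1) c < n := by
      have hlt : D (n + 1) c < n + 1 := h1.1.1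
      have hle := h1.1.2
      by_contra hno
      have he : D (n + 1) c = n := by omega
      rw [he] at hle
      omega
    refine IsGreatest.unique ?_ (hD n c)
    exact ⟨⟨hmem, h1.1.2⟩, fun l hl => h1.2 ⟨by have := hl.1; omega, hl.2⟩⟩
  set S : ℤ → ℕ → Fin m := fun n j => a (gam z (D n (Hz z n - ((j : ℤ) + 1)))) with hS
  have hstep : ∀ n : ℤ, act (x n) (some (S (n + 1))) = some (S n) := by
    intro n
    rw [hx n]
    cases hzn : z n with
    | true =>
        have hH1 : Hz z (n + 1) = Hz z n + 1 := by rw [hH n, hzn]; rfl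
        simp only [hzn, if_true]
        have htop : S (n + 1) 0 = a (gam z n) := by
          have hDn : D (n + 1) (Hz z (n + 1) - ((0 : ℕ) + 1)) = n := by
            refine IsGreatest.unique (hD (n + 1) _) ⟨⟨by omega, by push_cast; omega⟩, ?_⟩
            intro l hl
            have := hl.1
            omega
          rw [hS]
          simp only
          rw [hDn]
        show (if S (n + 1) 0 = a (gam z n) then some (fun k => S (n + 1) (k + 1)) else none)
            = some (S n)
        rw [if_pos htop]
        congr 1
        funext j
        show S (n + 1) (j + 1) = S n j
        rw [hS]
        simp only
        have hc : Hz z (n + 1) - ((((j : ℕ) + 1 : ℕ) : ℤ) + 1) = Hz z n - ((j : ℤ) + 1) := by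
          push_cast
          omega
        rw [hc, hDshift n _ (by omega)]
    | false =>
        have hH1 : Hz z (n + 1) = Hz z n - 1 := by rw [hH n, hzn]; rfl
        simp only [hzn, Bool.false_eq_true, if_false]
        show some (fun k => match k with | 0 => a (gam z (eps n)) | Nat.succ k => S (n + 1) k)
            = some (S n)
        congr 1
        funext k
        cases k with
        | zero =>
            show a (gam z (eps n)) = S n 0
            have hDn : D n (Hz z n - (((0 : ℕ) : ℤ) + 1)) = eps n := by
              refine IsGreatest.unique (hD n _) ?_
              have h2 := heps n
              have hseteq : {l : ℤ | l < n ∧ Hz z l ≤ Hz z (n + 1)}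
                  = {l : ℤ | l < n ∧ Hz z l ≤ Hz z n - (((0 : ℕ) : ℤ) + 1)} := by
                ext l
                simp only [Set.mem_setOf_eq]
                constructor <;> exact fun hl => ⟨hl.1, by push_cast at *; omega⟩
              rw [hseteq] at h2
              exact h2
            rw [hS]
            simp only
            rw [hDn]
        | succ k =>
            show S (n + 1) k = S n (k + 1)
            rw [hS]
            simp only
            have hc : Hz z (n + 1) - (((k : ℕ) : ℤ) + 1) = Hz z n - ((((k + 1 : ℕ) : ℕ) : ℤ) + 1) := by
              push_cast
              omega
            rw [hc, hDshift n _ (by push_cast; omega)]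
  -- final assembly
  intro p q hpq hcon
  have hker := Con.le_def.mp (dyckCon_le_ker m) hcon
  rw [Con.ker_rel] at hker
  have key : ∀ (M : ℕ) (r : ℤ),
      List.foldr act (some (S (r + (M : ℤ)))) ((List.range M).map (fun i : ℕ => x (r + (i : ℤ)))) = some (S r) := by
    intro M
    induction M with
    | zero => intro r; norm_num
    | succ M ih =>
        intro r
        rw [List.range_succ, List.map_append, List.foldr_append]
        simp only [List.map_cons, List.map_nil, List.foldr_cons, List.foldr_nil]
        have e1 : act (x (r + M)) (some (S (r + ((M + 1 : ℕ) : ℤ)))) = some (S (r + M)) := by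
          have hcast : r + ((M + 1 : ℕ) : ℤ) = (r + M) + 1 := by push_cast; ring
          rw [hcast]
          exact hstep (r + M)
        rw [e1]
        exact ih r
  set N : ℕ := (q + 1 - p).toNat with hN
  have hNp : p + (N : ℤ) = q + 1 := by
    have := Int.toNat_of_nonneg (by omega : (0 : ℤ) ≤ q + 1 - p)
    omega
  have hval : psiF m (wordVal (wordOf x p q)) (some (S (q + 1))) = some (S p) := by
    have hw : wordOf x p q = (List.range N).map (fun i : ℕ => x (p + (i : ℤ))) := by
      rw [hN]
      unfold wordOf
      induction (q + 1 - p).toNat with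
      | zero => rfl
      | succ K ih => rw [List.range_succ]; simp_all
    rw [psiF_word, phiF_ofList, hw, ← hNp]
    exact key N p
  rw [hker] at hval
  exact Option.some_ne_none _ (show (none : Option (ℕ → Fin m)) = some (S p) from hval).symm
end

section
/- If w and w' are admissible Dyck words of equal length that are equivalent mod the Dyck monoid, then μ̃([w]_k) = μ̃([w']_k) for every k ∈ ℤ, where μ̃ is the measure whose cylinder values are m^{−(n₁+n₂)} 2^{−|w|} with n₁ the number of matched α's and n₂ the number of unmatched letters. -/
open scoped BigOperators

/-- Height of a finite word after `i` letters. -/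
def Hw {m : ℕ} (w : List (DA m)) (i : ℕ) : ℤ := ((w.take i).map daSgn).sum

/-- Positions of `α`'s in `w` that are matched (paired) within `w` itself: the height
returns to its current value at some later point inside the word. -/
def matchedIdx {m : ℕ} (w : List (DA m)) : Finset (Fin w.length) :=
  Finset.univ.filter (fun p =>
    (w.get p).isLeft ∧ ∃ q : Fin w.length, p < q ∧ Hw w ((q : ℕ) + 1) = Hw w (p : ℕ))

/-- `n₁(w)`: the number of matched `α`'s of `w`. -/
def n₁ {m : ℕ} (w : List (DA m)) : ℕ := (matchedIdx w).card

/-- `n₂(w)`: the number of unmatched letters of `w` (so `2 n₁ + n₂ = |w|`). -/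
def n₂ {m : ℕ} (w : List (DA m)) : ℕ := w.length - 2 * n₁ w

namespace DyckAux
variable {m : ℕ}

abbrev NF (m : ℕ) := List (Fin m) × List (Fin m)

def red : List (Fin m) → List (Fin m) → Option (NF m)
  | [], u => some ([], u)
  | i :: r, [] => some (i :: r, [])
  | i :: r, j :: u => if i = j then red r u else none

def step : Option (NF m) → DA m → Option (NF m)
  | none, _ => none
  | some (u, r), Sum.inl i => some (u, i :: r)
  | some (u, r), Sum.inr j =>
    match r with
    | [] => some (u ++ [j], [])
    | i :: r' => if i = j then some (u, r') else none

def nf (w : List (DA m)) : Option (NF m) := w.foldl step (some ([], []))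

def op : Option (NF m) → Option (NF m) → Option (NF m)
  | none, _ => none
  | some _, none => none
  | some (u, r), some (u', r') => (red r u').map (fun p => (u ++ p.2, r' ++ p.1))

theorem red_nil (r : List (Fin m)) : red r [] = some (r, []) := by
  cases r <;> rfl

theorem red_append (r u : List (Fin m)) (j : Fin m) :
    red r (u ++ [j]) = (red r u).bind (fun p =>
      match p with
      | ([], u₀) => some (([] : List (Fin m)), u₀ ++ [j])
      | (i :: r₀, u₀) => if i = j then some (r₀, u₀) else none) := by
  induction r generalizing u with
  | nil => simp [red]
  | cons i r ih =>
    cases u with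
    | nil =>
      simp only [List.nil_append, red, red_nil, Option.bind_some]
    | cons x u =>
      simp only [List.cons_append, red]
      by_cases h : i = x <;> simp [h, ih]

theorem step_op (s t : Option (NF m)) (a : DA m) :
    op s (step t a) = step (op s t) a := by
  cases s with
  | none => rfl
  | some p =>
    obtain ⟨u, r⟩ := p
    cases t with
    | none => rfl
    | some q =>
      obtain ⟨u', r'⟩ := q
      cases a with
      | inl i =>
        cases h : red r u' <;> simp [op, step, h]
      | inr j =>
        cases r' with
        | cons i r'' =>
          by_cases hij : i = j
          · cases h : red r u' <;> simp [op, step, h, hij]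
          · cases h : red r u' <;> simp [op, step, h, hij]
        | nil =>
          cases h : red r u' with
          | none => simp [op, step, red_append, h]
          | some p₀ =>
            obtain ⟨r₀, u₀⟩ := p₀
            cases r₀ with
            | nil => simp [op, step, red_append, h]
            | cons i r₁ =>
              by_cases hij : i = j <;>
                simp [op, step, red_append, h, hij]

theorem op_foldl (l : List (DA m)) (s t : Option (NF m)) :
    op s (l.foldl step t) = l.foldl step (op s t) := by
  induction l generalizing t with
  | nil => rfl
  | cons a l ih => simp only [List.foldl_cons, ih, step_op]

theorem op_unit (s : Option (NF m)) : op s (some ([], [])) = s := by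
  cases s with
  | none => rfl
  | some p => obtain ⟨u, r⟩ := p; simp [op, red_nil]

theorem nf_append (l₁ l₂ : List (DA m)) : nf (l₁ ++ l₂) = op (nf l₁) (nf l₂) := by
  have := op_foldl l₂ (nf l₁) (some ([], []))
  rw [op_unit] at this
  show (l₁ ++ l₂).foldl step (some ([], [])) = _
  rw [List.foldl_append]
  exact this.symm


def Q (x : WithZero (FreeMonoid (DA m))) : Option (NF m) :=
  Option.bind x (fun w => nf (FreeMonoid.toList w))

theorem Q_zero : Q (0 : WithZero (FreeMonoid (DA m))) = none := rfl

theorem Q_coe (w : FreeMonoid (DA m)) :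
    Q ((w : WithZero (FreeMonoid (DA m)))) = nf (FreeMonoid.toList w) := rfl

theorem Q_one : Q (1 : WithZero (FreeMonoid (DA m))) = some ([], []) := rfl

theorem Q_mul (x y : WithZero (FreeMonoid (DA m))) : Q (x * y) = op (Q x) (Q y) := by
  induction x with
  | zero => simp [Q_zero, zero_mul, op]
  | coe a =>
    induction y with
    | zero =>
      rw [mul_zero, Q_zero, Q_coe]
      cases h : nf (FreeMonoid.toList a) <;> simp [op, h]
    | coe b =>
      rw [← WithZero.coe_mul, Q_coe, Q_coe, Q_coe, FreeMonoid.toList_mul, nf_append]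

theorem Q_eq_of_con {x y : WithZero (FreeMonoid (DA m))} (h : dyckCon m x y) : Q x = Q y := by
  change ConGen.Rel (dyckRel m) x y at h
  induction h with
  | of x y hxy =>
    rcases hxy with ⟨j, rfl, rfl⟩ | ⟨i, j, hij, rfl, rfl⟩
    · rw [Q_coe, Q_one]
      show nf [Sum.inl j, Sum.inr j] = _
      simp [nf, step]
    · rw [Q_coe, Q_zero]
      show nf [Sum.inl i, Sum.inr j] = _
      simp [nf, step, hij]
  | refl x => rfl
  | symm _ ih => exact ih.symm
  | trans _ _ ih₁ ih₂ => exact ih₁.trans ih₂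
  | mul _ _ ih₁ ih₂ => rw [Q_mul, Q_mul, ih₁, ih₂]

theorem nf_concat (t : List (DA m)) (a : DA m) : nf (t ++ [a]) = step (nf t) a := by
  rw [nf, List.foldl_append]; rfl

theorem wordVal_append (l₁ l₂ : List (DA m)) : wordVal (l₁ ++ l₂) = wordVal l₁ * wordVal l₂ := by
  rw [wordVal, wordVal, wordVal, FreeMonoid.ofList_append, WithZero.coe_mul]

def psi : Option (NF m) → WithZero (FreeMonoid (DA m))
  | none => 0
  | some (u, r) => wordVal (u.map Sum.inr ++ (r.map Sum.inl).reverse)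

theorem con_nf (w : List (DA m)) : dyckCon m (wordVal w) (psi (nf w)) := by
  induction w using List.reverseRecOn with
  | nil => exact (dyckCon m).refl _
  | append_singleton t a ih =>
    rw [wordVal_append, nf_concat]
    refine ((dyckCon m).mul ih ((dyckCon m).refl (wordVal [a]))).trans ?_
    cases h : nf t with
    | none =>
      show dyckCon m (0 * wordVal [a]) (psi (step none a))
      rw [zero_mul]
      exact (dyckCon m).refl _
    | some p =>
      obtain ⟨u, r⟩ := p
      cases a with
      | inl i =>
        show dyckCon m (wordVal _ * wordVal [Sum.inl i]) _
        rw [← wordVal_append]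
        show dyckCon m _ (psi (some (u, i :: r)))
        simp only [psi, List.map_cons, List.reverse_cons, ← List.append_assoc]
        exact (dyckCon m).refl _
      | inr j =>
        cases r with
        | nil =>
          show dyckCon m (wordVal _ * wordVal [Sum.inr j]) (psi (some (u ++ [j], [])))
          rw [← wordVal_append]
          simp only [psi, List.map_append, List.map_nil, List.reverse_nil, List.append_nil,
            List.map_cons]
          exact (dyckCon m).refl _
        | cons i r' =>
          show dyckCon m (wordVal _ * wordVal [Sum.inr j])
            (psi (if i = j then some (u, r') else none))
          have hsplit : (u.map Sum.inr ++ ((i :: r').map Sum.inl).reverse : List (DA m)) ++ [Sum.inr j]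
              = (u.map Sum.inr ++ (r'.map Sum.inl).reverse) ++ [Sum.inl i, Sum.inr j] := by
            simp
          rw [← wordVal_append, hsplit, wordVal_append]
          have hgen2 : wordVal [(Sum.inl i : DA m), Sum.inr j]
              = ((FreeMonoid.of (Sum.inl i) * FreeMonoid.of (Sum.inr j) : FreeMonoid (DA m)) :
                  WithZero (FreeMonoid (DA m))) := rfl
          by_cases hij : i = j
          · subst hij
            have hg : dyckCon m (wordVal [(Sum.inl i : DA m), Sum.inr i]) 1 := by
              rw [hgen2]; exact ConGen.Rel.of _ _ (Or.inl ⟨i, rfl, rfl⟩)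
            refine ((dyckCon m).mul ((dyckCon m).refl _) hg).trans ?_
            rw [mul_one, if_pos rfl]
            exact (dyckCon m).refl _
          · have hg : dyckCon m (wordVal [(Sum.inl i : DA m), Sum.inr j]) 0 := by
              rw [hgen2]; exact ConGen.Rel.of _ _ (Or.inr ⟨i, j, hij, rfl, rfl⟩)
            refine ((dyckCon m).mul ((dyckCon m).refl _) hg).trans ?_
            rw [mul_zero, if_neg hij]
            exact (dyckCon m).refl _

theorem nf_ne_none_of_nonzero {w : List (DA m)} (hw : IsNonzeroWord w) : nf w ≠ none := by
  intro h
  apply hw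
  have := con_nf w
  rw [h] at this
  exact this

theorem daSgn_eq_one_or {a : DA m} : daSgn a = 1 ∨ daSgn a = -1 := by
  cases a <;> simp [daSgn]

theorem isLeft_of_daSgn {a : DA m} (h : daSgn a = 1) : a.isLeft = true := by
  cases a <;> simp [daSgn] at h ⊢

theorem daSgn_of_isLeft {a : DA m} (h : a.isLeft = true) : daSgn a = 1 := by
  cases a <;> simp [daSgn] at h ⊢

theorem Hw_zero (w : List (DA m)) : Hw w 0 = 0 := rfl

theorem Hw_succ (w : List (DA m)) (p : ℕ) (hp : p < w.length) :
    Hw w (p + 1) = Hw w p + daSgn (w.get ⟨p, hp⟩) := by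
  have h : w.take (p + 1) = w.take p ++ [w[p]] := by
    rw [List.take_succ, List.getElem?_eq_getElem hp]
    rfl
  rw [Hw, Hw, h, List.map_append, List.sum_append]
  simp

theorem Hw_append_le (t : List (DA m)) (a : DA m) {i : ℕ} (h : i ≤ t.length) :
    Hw (t ++ [a]) i = Hw t i := by
  rw [Hw, Hw, List.take_append_of_le_length h]

theorem Hw_append_last (t : List (DA m)) (a : DA m) :
    Hw (t ++ [a]) (t.length + 1) = Hw t t.length + daSgn a := by
  have h1 : (t ++ [a]).take (t.length + 1) = t ++ [a] :=
    List.take_of_length_le (by simp)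
  have h2 : t.take t.length = t := by simp
  rw [Hw, Hw, h1, h2, List.map_append, List.sum_append]
  simp

/-- Discrete IVT (downward crossing). -/
theorem ivt_down (f : ℕ → ℤ) (b : ℕ)
    (hstep : ∀ i, i + 1 ≤ b → f (i + 1) = f i + 1 ∨ f (i + 1) = f i - 1)
    (a : ℕ) (hab : a ≤ b) (c : ℤ) (ha : c < f a) (hb : f b ≤ c) :
    ∃ i, a < i ∧ i ≤ b ∧ f i = c := by
  induction b with
  | zero =>
    have ha0 : a = 0 := by omega
    subst ha0
    omega
  | succ b ih =>
    by_cases h : f b ≤ c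
    · have hab' : a ≤ b := by
        rcases Nat.lt_succ_iff_lt_or_eq.mp (Nat.lt_succ_of_le hab) with h' | h'
        · omega
        · subst h'; omega
      obtain ⟨i, h1, h2, h3⟩ := ih (fun i hi => hstep i (by omega)) hab' h
      exact ⟨i, h1, by omega, h3⟩
    · push_neg at h
      have := hstep b (le_refl _)
      have hfb1 : f (b + 1) = c := by omega
      refine ⟨b + 1, ?_, le_refl _, hfb1⟩
      rcases Nat.lt_or_ge a (b + 1) with h' | h'
      · exact h'
      · exfalso
        have : a = b + 1 := by omega
        subst this
        omega

/-- Discrete IVT (upward crossing): there is a point where `f = c` before `b`. -/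
theorem ivt_up (f : ℕ → ℤ) (b : ℕ)
    (hstep : ∀ i, i + 1 ≤ b → f (i + 1) = f i + 1 ∨ f (i + 1) = f i - 1)
    (a : ℕ) (hab : a ≤ b) (c : ℤ) (ha : f a ≤ c) (hb : c < f b) :
    ∃ i, a ≤ i ∧ i < b ∧ f i = c := by
  set g : ℕ → ℤ := fun j => f (b - j) with hg
  have hstep' : ∀ j, j + 1 ≤ b - a → g (j + 1) = g j + 1 ∨ g (j + 1) = g j - 1 := by
    intro j hj
    have h1 : b - j = (b - (j + 1)) + 1 := by omega
    have := hstep (b - (j + 1)) (by omega)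
    simp only [hg]
    rw [h1]
    omega
  obtain ⟨j, h1, h2, h3⟩ := ivt_down g (b - a) hstep' 0 (by omega) c (by simpa [hg] using hb)
    (by simp only [hg]; rw [Nat.sub_sub_self hab]; exact ha)
  exact ⟨b - j, by omega, by omega, h3⟩

def mi (w : List (DA m)) : ℤ :=
  (Finset.range (w.length + 1)).inf' ⟨0, by simp⟩ (Hw w)

theorem mi_le (w : List (DA m)) {i : ℕ} (h : i ≤ w.length) : mi w ≤ Hw w i :=
  Finset.inf'_le _ (by simp; omega)

theorem mi_nonpos (w : List (DA m)) : mi w ≤ 0 := by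
  have := mi_le w (Nat.zero_le _)
  rwa [Hw_zero] at this

theorem exists_mi (w : List (DA m)) : ∃ i ≤ w.length, Hw w i = mi w := by
  obtain ⟨i, hi, h⟩ := Finset.exists_mem_eq_inf' (⟨0, by simp⟩ : ((Finset.range (w.length + 1)).Nonempty)) (Hw w)
  exact ⟨i, by simpa [Nat.lt_succ_iff] using hi, h.symm⟩

theorem mi_append (t : List (DA m)) (a : DA m) :
    mi (t ++ [a]) = min (mi t) (Hw t t.length + daSgn a) := by
  have hset : Finset.range ((t ++ [a]).length + 1) = insert (t.length + 1) (Finset.range (t.length + 1)) := by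
    simp [Finset.range_add_one]
  have h1 : mi (t ++ [a]) = (insert (t.length + 1) (Finset.range (t.length + 1))).inf'
      (Finset.insert_nonempty _ _) (Hw (t ++ [a])) := by
    rw [mi]
    exact Finset.inf'_congr _ hset (fun _ _ => rfl)
  have h2 : (Finset.range (t.length + 1)).inf' (⟨0, by simp⟩ : (Finset.range (t.length + 1)).Nonempty) (Hw (t ++ [a]))
      = mi t := by
    rw [mi]
    exact Finset.inf'_congr _ rfl (fun i hi => Hw_append_le t a (by simpa [Nat.lt_succ_iff] using hi))
  rw [h1, Finset.inf'_insert (H := ⟨0, by simp⟩), Hw_append_last, h2, min_comm]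

theorem Hw_step_pm (w : List (DA m)) : ∀ i, i + 1 ≤ w.length →
    Hw w (i + 1) = Hw w i + 1 ∨ Hw w (i + 1) = Hw w i - 1 := by
  intro i hi
  rw [Hw_succ w i (by omega)]
  rcases daSgn_eq_one_or (a := w.get ⟨i, by omega⟩) with h | h <;> rw [h] <;> [left; right] <;> ring

theorem mi_nil : mi ([] : List (DA m)) = 0 := by
  rw [mi]
  simp [Finset.range_one, Hw_zero]

/-! ### nf lengths -/

theorem nf_lengths : ∀ {w : List (DA m)} {u r : List (Fin m)}, nf w = some (u, r) →
    (u.length : ℤ) = - mi w ∧ (r.length : ℤ) = Hw w w.length - mi w := by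
  intro w
  induction w using List.reverseRecOn with
  | nil =>
    intro u r h
    have : (some (([], []) : NF m)) = some (u, r) := h
    simp only [Option.some.injEq, Prod.mk.injEq] at this
    obtain ⟨rfl, rfl⟩ := this
    simp [mi_nil, Hw_zero]
  | append_singleton t a ih =>
    intro u r h
    rw [nf_concat] at h
    cases hnf : nf t with
    | none => rw [hnf] at h; exact absurd h (by simp [step])
    | some p =>
      obtain ⟨u₀, r₀⟩ := p
      rw [hnf] at h
      obtain ⟨h1, h2⟩ := ih hnf
      have hmile : mi t ≤ Hw t t.length := mi_le t (le_refl _)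
      cases a with
      | inl i =>
        simp only [step, Option.some.injEq, Prod.mk.injEq] at h
        obtain ⟨rfl, rfl⟩ := h.symm
        have hlen2 : (t ++ [Sum.inl i]).length = t.length + 1 := by simp
        rw [mi_append, hlen2, Hw_append_last]
        simp only [daSgn, List.length_cons]
        rw [min_eq_left (by omega)]
        constructor
        · omega
        · push_cast
          omega
      | inr j =>
        cases r₀ with
        | nil =>
          simp only [step, Option.some.injEq, Prod.mk.injEq] at h
          obtain ⟨rfl, rfl⟩ := h.symm
          have hfm : Hw t t.length = mi t := by
            simp at h2
            omega
          have hlen2 : (t ++ [Sum.inr j]).length = t.length + 1 := by simp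
          rw [mi_append, hlen2, Hw_append_last]
          simp only [daSgn, List.length_append, List.length_singleton, List.length_nil]
          rw [min_eq_right (by omega)]
          constructor
          · push_cast
            omega
          · push_cast
            omega
        | cons i r₀' =>
          simp only [step] at h
          by_cases hij : i = j
          · rw [if_pos hij] at h
            simp only [Option.some.injEq, Prod.mk.injEq] at h
            obtain ⟨rfl, rfl⟩ := h.symm
            have hr : (r₀'.length : ℤ) + 1 = Hw t t.length - mi t := by
              simp at h2
              push_cast at h2
              omega
            have hlen2 : (t ++ [Sum.inr j]).length = t.length + 1 := by simp
            rw [mi_append, hlen2, Hw_append_last]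
            simp only [daSgn]
            rw [min_eq_left (by omega)]
            constructor
            · omega
            · push_cast
              omega
          · rw [if_neg hij] at h
            exact absurd h (by simp)

/-! ### matched positions -/

def MatchedAt (w : List (DA m)) (p : ℕ) : Prop :=
  ∃ h : p < w.length, (w.get ⟨p, h⟩).isLeft = true ∧
    ∃ q, p < q ∧ q < w.length ∧ Hw w (q + 1) = Hw w p

open Classical in
noncomputable def Nc (w : List (DA m)) : ℕ :=
  ((Finset.range w.length).filter (fun p => MatchedAt w p)).card

theorem get_append_left (t : List (DA m)) (a : DA m) {p : ℕ} (hp : p < t.length) :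
    (t ++ [a]).get ⟨p, by simp; omega⟩ = t.get ⟨p, hp⟩ := by
  simp [List.getElem_append_left hp]

theorem matchedAt_mono {t : List (DA m)} {a : DA m} {p : ℕ} (h : MatchedAt t p) :
    MatchedAt (t ++ [a]) p := by
  obtain ⟨hp, hL, q, hq1, hq2, hq3⟩ := h
  refine ⟨by simp; omega, ?_, q, hq1, by simp; omega, ?_⟩
  · rw [get_append_left t a hp]
    exact hL
  · rw [Hw_append_le t a (by omega), Hw_append_le t a (by omega)]
    exact hq3

theorem not_matchedAt_last (t : List (DA m)) (a : DA m) :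
    ¬ MatchedAt (t ++ [a]) t.length := by
  rintro ⟨hp, hL, q, hq1, hq2, hq3⟩
  have hlen : (t ++ [a]).length = t.length + 1 := by simp
  cases a with
  | inl i => omega
  | inr j =>
    have : (t ++ ([Sum.inr j] : List (DA m))).get ⟨t.length, hp⟩ = Sum.inr j := by
      simp
    rw [this] at hL
    simp at hL

theorem matchedAt_back_alpha {t : List (DA m)} {i : Fin m} {p : ℕ} (hp : p < t.length)
    (h : MatchedAt (t ++ [Sum.inl i]) p) : MatchedAt t p := by
  obtain ⟨hp', hL, q, hq1, hq2, hq3⟩ := h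
  rw [get_append_left t _ hp] at hL
  have hlen : (t ++ ([Sum.inl i] : List (DA m))).length = t.length + 1 := by simp
  by_cases hq : q < t.length
  · refine ⟨hp, hL, q, hq1, hq, ?_⟩
    rw [Hw_append_le t _ (by omega), Hw_append_le t _ (by omega)] at hq3
    exact hq3
  · -- q = t.length; the appended α raises the height back to `Hw t p`
    have hqe : q = t.length := by omega
    subst hqe
    rw [Hw_append_last, Hw_append_le t _ (by omega)] at hq3
    simp only [daSgn] at hq3
    -- Hw t t.length + 1 = Hw t p
    have hstep := Hw_step_pm t
    have hp1 : Hw t (p + 1) = Hw t p + 1 := by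
      rw [Hw_succ t p hp, daSgn_of_isLeft hL]
    obtain ⟨i', hi1, hi2, hi3⟩ := ivt_down (Hw t) t.length hstep (p + 1) (by omega)
      (Hw t p) (by omega) (by omega)
    exact ⟨hp, hL, i' - 1, by omega, by omega, by
      have : i' - 1 + 1 = i' := by omega
      rw [this]; exact hi3⟩

theorem matchedAt_back_beta_low {t : List (DA m)} {j : Fin m} {p : ℕ}
    (hlow : Hw t t.length ≤ mi t) (hp : p < t.length)
    (h : MatchedAt (t ++ [Sum.inr j]) p) : MatchedAt t p := by
  obtain ⟨hp', hL, q, hq1, hq2, hq3⟩ := h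
  rw [get_append_left t _ hp] at hL
  have hlen : (t ++ ([Sum.inr j] : List (DA m))).length = t.length + 1 := by simp
  by_cases hq : q < t.length
  · refine ⟨hp, hL, q, hq1, hq, ?_⟩
    rw [Hw_append_le t _ (by omega), Hw_append_le t _ (by omega)] at hq3
    exact hq3
  · exfalso
    have hqe : q = t.length := by omega
    subst hqe
    rw [Hw_append_last, Hw_append_le t _ (by omega)] at hq3
    simp only [daSgn] at hq3
    have := mi_le t (le_of_lt hp)
    omega

theorem Nc_append_alpha (t : List (DA m)) (i : Fin m) :
    Nc (t ++ [Sum.inl i]) = Nc t := by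
  classical
  rw [Nc, Nc]
  congr 1
  ext p
  simp only [Finset.mem_filter, Finset.mem_range, List.length_append, List.length_singleton]
  constructor
  · rintro ⟨hp, hM⟩
    have hne : p ≠ t.length := by
      rintro rfl
      exact not_matchedAt_last t _ hM
    have hp' : p < t.length := by omega
    exact ⟨hp', matchedAt_back_alpha hp' hM⟩
  · rintro ⟨hp, hM⟩
    exact ⟨by omega, matchedAt_mono hM⟩

theorem Nc_append_beta_low (t : List (DA m)) (j : Fin m) (hlow : Hw t t.length ≤ mi t) :
    Nc (t ++ [Sum.inr j]) = Nc t := by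
  classical
  rw [Nc, Nc]
  congr 1
  ext p
  simp only [Finset.mem_filter, Finset.mem_range, List.length_append, List.length_singleton]
  constructor
  · rintro ⟨hp, hM⟩
    have hne : p ≠ t.length := by
      rintro rfl
      exact not_matchedAt_last t _ hM
    have hp' : p < t.length := by omega
    exact ⟨hp', matchedAt_back_beta_low hlow hp' hM⟩
  · rintro ⟨hp, hM⟩
    exact ⟨by omega, matchedAt_mono hM⟩

theorem Nc_append_beta_high (t : List (DA m)) (j : Fin m) (hlt : mi t < Hw t t.length) :
    Nc (t ++ [Sum.inr j]) = Nc t + 1 := by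
  classical
  set c : ℤ := Hw t t.length - 1 with hc
  have hstep := Hw_step_pm t
  -- the set of positions at height c
  set S : Finset ℕ := (Finset.range (t.length + 1)).filter (fun i => Hw t i = c) with hS
  have hSne : S.Nonempty := by
    obtain ⟨i₀, hi₀le, hi₀⟩ := exists_mi t
    obtain ⟨i₁, h1, h2, h3⟩ := ivt_up (Hw t) t.length hstep i₀ hi₀le c
      (by omega) (by omega)
    exact ⟨i₁, by simp [hS]; omega⟩
  set P : ℕ := S.max' hSne with hP
  have hPmem := S.max'_mem hSne
  have hPle : P ≤ t.length := by
    have := Finset.mem_filter.mp hPmem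
    have := Finset.mem_range.mp this.1
    omega
  have hPval : Hw t P = c := (Finset.mem_filter.mp hPmem).2
  have hPmax : ∀ i, i ≤ t.length → Hw t i = c → i ≤ P := by
    intro i h1 h2
    exact S.le_max' i (by simp [hS]; exact ⟨by omega, h2⟩)
  have hPlt : P < t.length := by
    rcases Nat.lt_or_ge P t.length with h | h
    · exact h
    · exfalso
      have : P = t.length := by omega
      rw [this] at hPval
      omega
  have hα : daSgn (t.get ⟨P, hPlt⟩) = 1 := by
    rcases hstep P (by omega) with h | h
    · have := Hw_succ t P hPlt
      omega
    · exfalso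
      obtain ⟨i', h1, h2, h3⟩ := ivt_up (Hw t) t.length hstep (P + 1) (by omega) c
        (by omega) (by omega)
      have := hPmax i' (by omega) h3
      omega
  have hMW_P : MatchedAt (t ++ [Sum.inr j]) P := by
    refine ⟨by simp; omega, ?_, t.length, hPlt, by simp, ?_⟩
    · rw [get_append_left t _ hPlt]
      exact isLeft_of_daSgn hα
    · rw [Hw_append_last, Hw_append_le t _ (by omega)]
      simp only [daSgn]
      omega
  have hMT_P : ¬ MatchedAt t P := by
    rintro ⟨h, hL, q, hq1, hq2, hq3⟩
    have := hPmax (q + 1) (by omega) (by omega)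
    omega
  have huniq : ∀ p, p < t.length → MatchedAt (t ++ [Sum.inr j]) p → p ≠ P → MatchedAt t p := by
    intro p hp hM hne
    obtain ⟨hp', hL, q, hq1, hq2, hq3⟩ := hM
    rw [get_append_left t _ hp] at hL
    have hlen : (t ++ ([Sum.inr j] : List (DA m))).length = t.length + 1 := by simp
    by_cases hq : q < t.length
    · refine ⟨hp, hL, q, hq1, hq, ?_⟩
      rw [Hw_append_le t _ (by omega), Hw_append_le t _ (by omega)] at hq3
      exact hq3
    · have hqe : q = t.length := by omega
      subst hqe
      rw [Hw_append_last, Hw_append_le t _ (by omega)] at hq3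
      simp only [daSgn] at hq3
      -- Hw t p = c
      have hpc : Hw t p = c := by omega
      have hpP : p < P := by
        have := hPmax p (by omega) hpc
        omega
      have hpP1 : p < P - 1 := by
        rcases Nat.lt_or_ge p (P - 1) with h | h
        · exact h
        · exfalso
          have : p = P - 1 := by omega
          subst this
          rcases hstep (P - 1) (by omega) with h' | h' <;>
          · have hrw : P - 1 + 1 = P := by omega
            rw [hrw] at h'
            omega
      refine ⟨hp, hL, P - 1, by omega, by omega, ?_⟩
      have hrw : P - 1 + 1 = P := by omega
      rw [hrw]
      omega
  have hset : (Finset.range (t ++ ([Sum.inr j] : List (DA m))).length).filter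
      (fun p => MatchedAt (t ++ [Sum.inr j]) p)
      = insert P ((Finset.range t.length).filter (fun p => MatchedAt t p)) := by
    ext p
    simp only [Finset.mem_filter, Finset.mem_insert, Finset.mem_range, List.length_append,
      List.length_singleton]
    constructor
    · rintro ⟨hp, hM⟩
      have hne : p ≠ t.length := by
        rintro rfl
        exact not_matchedAt_last t _ hM
      have hp' : p < t.length := by omega
      by_cases hPp : p = P
      · exact Or.inl hPp
      · exact Or.inr ⟨hp', huniq p hp' hM hPp⟩
    · rintro (rfl | ⟨hp, hM⟩)
      · exact ⟨by omega, hMW_P⟩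
      · exact ⟨by omega, matchedAt_mono hM⟩
  rw [Nc, hset, Finset.card_insert_of_notMem (by simp [hMT_P]), Nc]

/-! ### main counting identity -/

theorem two_Nc (w : List (DA m)) :
    2 * (Nc w : ℤ) = (w.length : ℤ) - Hw w w.length + 2 * mi w := by
  induction w using List.reverseRecOn with
  | nil => simp [Nc, Hw_zero, mi_nil]
  | append_singleton t a ih =>
    have hmile : mi t ≤ Hw t t.length := mi_le t (le_refl _)
    have hlast := Hw_append_last t a
    have hmia := mi_append t a
    have hlen : ((t ++ [a]).length : ℤ) = (t.length : ℤ) + 1 := by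
      simp
    cases a with
    | inl i =>
      have hlen2 : (t ++ [Sum.inl i]).length = t.length + 1 := by simp
      rw [Nc_append_alpha, hlen2, Hw_append_last, mi_append]
      simp only [daSgn]
      rw [min_eq_left (by omega)]
      push_cast
      omega
    | inr j =>
      have hlen2 : (t ++ [Sum.inr j]).length = t.length + 1 := by simp
      by_cases hcmp : Hw t t.length ≤ mi t
      · rw [Nc_append_beta_low t j hcmp, hlen2, Hw_append_last, mi_append]
        simp only [daSgn]
        rw [min_eq_right (by omega)]
        push_cast
        omega
      · push_neg at hcmp
        rw [Nc_append_beta_high t j hcmp, hlen2, Hw_append_last, mi_append]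
        simp only [daSgn]
        rw [min_eq_left (by omega)]
        push_cast
        omega


theorem n1_eq_Nc (w : List (DA m)) : n₁ w = Nc w := by
  classical
  rw [n₁, Nc]
  apply Finset.card_bij (fun (p : Fin w.length) _ => (p : ℕ))
  · intro a ha
    simp only [matchedIdx, Finset.mem_filter, Finset.mem_univ, true_and] at ha
    obtain ⟨hL, q, hq1, hq2⟩ := ha
    exact Finset.mem_filter.mpr ⟨Finset.mem_range.mpr a.isLt, a.isLt, hL, q, hq1, q.isLt, hq2⟩
  · intro a _ b _ h
    exact Fin.ext h
  · intro b hb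
    simp only [Finset.mem_filter, Finset.mem_range] at hb
    obtain ⟨hblt, h, hL, q, hq1, hq2, hq3⟩ := hb
    refine ⟨⟨b, h⟩, ?_, rfl⟩
    simp only [matchedIdx, Finset.mem_filter, Finset.mem_univ, true_and]
    exact ⟨hL, ⟨q, hq2⟩, hq1, hq3⟩

end DyckAux

open MeasureTheory in
/-- for the measure `μ̃` whose cylinder values are `m^{-(n₁+n₂)} 2^{-|w|}`,
equivalent admissible words of equal length have equal cylinder measure. -/
theorem muTilde_cylinder_equiv (m : ℕ) (hm : 2 ≤ m) (μ : Measure (ℤ → DA m))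
    (hcyl : ∀ (v : List (DA m)), IsNonzeroWord v → ∀ t : ℤ,
      μ (cylSet v t) = (m : ENNReal)⁻¹ ^ (n₁ v + n₂ v) * (2 : ENNReal)⁻¹ ^ v.length)
    (w w' : List (DA m)) (hw : IsNonzeroWord w) (hw' : IsNonzeroWord w')
    (hlen : w.length = w'.length) (hequiv : DyckEquiv w w') (k : ℤ) :
    μ (cylSet w k) = μ (cylSet w' k) := by
  classical
  have hnf : DyckAux.nf w = DyckAux.nf w' := DyckAux.Q_eq_of_con hequiv
  cases hw0 : DyckAux.nf w with
  | none => exact absurd hw0 (DyckAux.nf_ne_none_of_nonzero hw)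
  | some p =>
    obtain ⟨u, r⟩ := p
    have hw0' : DyckAux.nf w' = some (u, r) := by rw [← hnf, hw0]
    obtain ⟨hu1, hr1⟩ := DyckAux.nf_lengths hw0
    obtain ⟨hu2, hr2⟩ := DyckAux.nf_lengths hw0'
    have h2N := DyckAux.two_Nc w
    have h2N' := DyckAux.two_Nc w'
    have hlenZ : (w.length : ℤ) = (w'.length : ℤ) := by exact_mod_cast hlen
    have hNc : DyckAux.Nc w = DyckAux.Nc w' := by
      have : (DyckAux.Nc w : ℤ) = (DyckAux.Nc w' : ℤ) := by omega
      exact_mod_cast this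
    have hn1 : n₁ w = n₁ w' := by
      rw [DyckAux.n1_eq_Nc, DyckAux.n1_eq_Nc, hNc]
    have hn2 : n₂ w = n₂ w' := by rw [n₂, n₂, hlen, hn1]
    rw [hcyl w hw k, hcyl w' hw' k, hn1, hn2, hlen]
end

section
/- Let c ≠ 0 and n ≥ 0, and let A_c^n = {x ∈ B : x_{b_j(x)} = x_{b_{j+c}(x)} for all j > n}, where b_j(x) = max{k < 0 : H_k(x) = −j} and B is the set of Dyck-shift points with liminf H = −∞ in both directions. Then μ̃(A_c^n) = 0. -/
open scoped BigOperators

open Classical in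
/-- `ε_n(z) = max{l < n : H̃_l(z) ≤ H̃_{n+1}(z)}` (junk value if no maximum exists). -/
noncomputable def epsF (z : ℤ → Bool) (n : ℤ) : ℤ :=
  if h : ∃ l : ℤ, IsGreatest {l : ℤ | l < n ∧ Hz z l ≤ Hz z (n + 1)} l then h.choose else 0

/-- The coding map `F : {0,1}^ℤ × {1,…,m}^ℤ → Σ^ℤ` of Section 3. -/
noncomputable def Fmap (m : ℕ) (z : ℤ → Bool) (a : ℤ → Fin m) : ℤ → DA m :=
  fun n => if z n then Sum.inl (a (gam z n)) else Sum.inr (a (gam z (epsF z n)))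

/-- `μ₁` is the fair-coin Bernoulli measure on `{0,1}^ℤ`. -/
def IsBernoulliHalf (μ : MeasureTheory.Measure (ℤ → Bool)) : Prop :=
  MeasureTheory.IsProbabilityMeasure μ ∧
    ∀ (s : Finset ℤ) (f : ℤ → Bool), μ {z | ∀ i ∈ s, z i = f i} = (2 : ENNReal)⁻¹ ^ s.card

/-- `μ₂` is the uniform product measure on `{1,…,m}^ℤ`. -/
def IsUniformProduct (m : ℕ) (μ : MeasureTheory.Measure (ℤ → Fin m)) : Prop :=
  MeasureTheory.IsProbabilityMeasure μ ∧
    ∀ (s : Finset ℤ) (f : ℤ → Fin m), μ {a | ∀ i ∈ s, a i = f i} = (m : ENNReal)⁻¹ ^ s.card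

/-- The `μ̃` of Section 3: push-forward of `μ₁ × μ₂` under `F`. -/
noncomputable def muTilde (m : ℕ) (μ₁ : MeasureTheory.Measure (ℤ → Bool))
    (μ₂ : MeasureTheory.Measure (ℤ → Fin m)) : MeasureTheory.Measure (ℤ → DA m) :=
  MeasureTheory.Measure.map (fun p : (ℤ → Bool) × (ℤ → Fin m) => Fmap m p.1 p.2) (μ₁.prod μ₂)

/-- `B^{-∞}_{-∞}`: points of the Dyck shift whose height cocycle has liminf `-∞` in both
time directions. -/
def InBmm {m : ℕ} (x : ℤ → DA m) : Prop :=
  InDyckShift x ∧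
    Filter.liminf (fun n : ℤ => ((Hc x n : ℝ) : EReal)) Filter.atTop = ⊥ ∧
    Filter.liminf (fun n : ℤ => ((Hc x n : ℝ) : EReal)) Filter.atBot = ⊥

lemma cocycle_zero {γ : Type*} (s : γ → ℤ) (x : ℤ → γ) : cocycle s x 0 = 0 := by
  simp [cocycle]

lemma cocycle_succ {γ : Type*} (s : γ → ℤ) (x : ℤ → γ) (k : ℤ) :
    cocycle s x (k + 1) = cocycle s x k + s (x k) := by
  unfold cocycle
  rcases lt_trichotomy k (-1) with hk | hk | hk
  · have h1 : ¬ 0 ≤ k + 1 := by omega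
    have h2 : ¬ 0 ≤ k := by omega
    rw [if_neg h1, if_neg h2]
    have hn : (-k).toNat = (-(k+1)).toNat + 1 := by omega
    rw [hn, Finset.sum_range_succ']
    have hterm : ∀ i ∈ Finset.range (-(k+1)).toNat,
        s (x (k + ((i : ℕ) + 1 : ℕ))) = s (x (k + 1 + (i : ℕ))) := by
      intro i _
      congr 1
      push_cast
      ring
    rw [Finset.sum_congr rfl hterm]
    simp only [Nat.cast_zero, add_zero]
    ring_nf
  · subst hk
    norm_num [Finset.sum_range_one]
  · have h2 : 0 ≤ k := by omega
    have h1 : 0 ≤ k + 1 := by omega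
    rw [if_pos h1, if_pos h2]
    have hn : (k+1).toNat = k.toNat + 1 := by omega
    rw [hn, Finset.sum_range_succ]
    have : ((k.toNat : ℤ)) = k := Int.toNat_of_nonneg h2
    rw [this]

lemma walk_ivt (f : ℤ → ℤ) (hstep : ∀ k, f (k+1) = f k + 1 ∨ f (k+1) = f k - 1) :
    ∀ (d : ℕ) (a v : ℤ), f a ≤ v → v ≤ f (a + d) → ∃ l, a ≤ l ∧ l ≤ a + d ∧ f l = v := by
  intro d
  induction d with
  | zero =>
    intro a v h1 h2
    simp only [Nat.cast_zero, add_zero] at h2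
    exact ⟨a, le_rfl, by omega, by omega⟩
  | succ d ih =>
    intro a v h1 h2
    rcases eq_or_lt_of_le h1 with he | hlt
    · exact ⟨a, le_rfl, by omega, he⟩
    · have h3 : f (a+1) ≤ v := by rcases hstep a with hh | hh <;> omega
      have hcast : a + 1 + (d : ℤ) = a + ((d + 1 : ℕ) : ℤ) := by omega
      have h2' : v ≤ f (a + 1 + (d : ℤ)) := by rw [hcast]; exact h2
      obtain ⟨l, hl1, hl2, hl3⟩ := ih (a+1) v h3 h2'
      exact ⟨l, by omega, by omega, hl3⟩

lemma walk_ivt' (f : ℤ → ℤ) (hstep : ∀ k, f (k+1) = f k + 1 ∨ f (k+1) = f k - 1)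
    {a b v : ℤ} (hab : a ≤ b) (h1 : f a ≤ v) (h2 : v ≤ f b) :
    ∃ l, a ≤ l ∧ l ≤ b ∧ f l = v := by
  obtain ⟨d, rfl⟩ : ∃ d : ℕ, b = a + d := ⟨(b - a).toNat, by omega⟩
  exact walk_ivt f hstep d a v h1 h2

lemma walk_parity (f : ℤ → ℤ) (hstep : ∀ k, f (k+1) = f k + 1 ∨ f (k+1) = f k - 1)
    (hf0 : f 0 = 0) : ∀ l : ℤ, (2 : ℤ) ∣ f l - l := by
  intro l
  induction l using Int.induction_on with
  | zero => simp [hf0]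
  | succ i ih => rcases hstep i with h | h <;> omega
  | pred i ih =>
    have h := hstep (-(i:ℤ) - 1)
    rw [show (-(i:ℤ) - 1 + 1) = -(i:ℤ) by ring] at h
    rcases h with h | h <;> omega

lemma walk_exists_greatest (f : ℤ → ℤ)
    (hstep : ∀ k, f (k+1) = f k + 1 ∨ f (k+1) = f k - 1) (hf0 : f 0 = 0)
    (hlim : Filter.liminf (fun n : ℤ => ((f n : ℝ) : EReal)) Filter.atBot = ⊥)
    {j : ℤ} (hj : 0 < j) : ∃ k, IsGreatest {l : ℤ | l < 0 ∧ f l = -j} k := by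
  by_cases hex : ∃ l : ℤ, l < 0 ∧ f l ≤ -j
  · obtain ⟨l, hl0, hlj⟩ := hex
    obtain ⟨l', h1, h2, h3⟩ := walk_ivt' f hstep (le_of_lt hl0) hlj (by omega)
    have hl'0 : l' < 0 := lt_of_le_of_ne h2 (fun hEq => by rw [hEq, hf0] at h3; omega)
    obtain ⟨k, hk, hub⟩ := Int.exists_greatest_of_bdd (P := fun l => l < 0 ∧ f l = -j)
      ⟨0, fun z hz => le_of_lt hz.1⟩ ⟨l', hl'0, h3⟩
    exact ⟨k, hk, fun b hb => hub b hb⟩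
  · exfalso
    push_neg at hex
    have hmem : ((-j : ℝ) : EReal) ≤ Filter.liminf (fun n : ℤ => ((f n : ℝ) : EReal)) Filter.atBot := by
      rw [Filter.liminf_eq]
      apply le_sSup
      simp only [Set.mem_setOf_eq]
      filter_upwards [Filter.eventually_le_atBot (-1 : ℤ)] with l hl
      have hfl : -j < f l := hex l (by omega)
      have : (-j : ℝ) ≤ (f l : ℝ) := by exact_mod_cast le_of_lt hfl
      exact_mod_cast this
    rw [hlim] at hmem
    exact absurd hmem (not_le.2 (EReal.bot_lt_coe _))

lemma walk_greatest_mono (f : ℤ → ℤ)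
    (hstep : ∀ k, f (k+1) = f k + 1 ∨ f (k+1) = f k - 1) (hf0 : f 0 = 0)
    {j j' k k' : ℤ} (hj : 0 < j) (hlt : j < j')
    (hg : IsGreatest {l : ℤ | l < 0 ∧ f l = -j} k)
    (hg' : IsGreatest {l : ℤ | l < 0 ∧ f l = -j'} k') : k' ≤ k := by
  by_contra hcon
  push_neg at hcon
  have hk'0 : k' < 0 := hg'.1.1
  have hfk' : f k' = -j' := hg'.1.2
  obtain ⟨l, hl1, hl2, hl3⟩ := walk_ivt' f hstep (le_of_lt hk'0) (v := -j) (by omega) (by omega)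
  have hl0 : l < 0 := lt_of_le_of_ne hl2 (fun hEq => by rw [hEq, hf0] at hl3; omega)
  have := hg.2 ⟨hl0, hl3⟩
  omega

lemma walk_greatest_alpha (f : ℤ → ℤ)
    (hstep : ∀ k, f (k+1) = f k + 1 ∨ f (k+1) = f k - 1) (hf0 : f 0 = 0)
    {j k : ℤ} (hj : 0 < j) (hg : IsGreatest {l : ℤ | l < 0 ∧ f l = -j} k) :
    f (k + 1) = f k + 1 := by
  rcases hstep k with h | h
  · exact h
  · exfalso
    have hk0 : k < 0 := hg.1.1
    have hfk : f k = -j := hg.1.2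
    obtain ⟨l, hl1, hl2, hl3⟩ := walk_ivt' f hstep (by omega : k + 1 ≤ 0) (v := -j) (by omega) (by omega)
    have hl0 : l < 0 := lt_of_le_of_ne hl2 (fun hEq => by rw [hEq, hf0] at hl3; omega)
    have := hg.2 ⟨hl0, hl3⟩
    omega

lemma walk_greatest_index_ne (f : ℤ → ℤ)
    (hstep : ∀ k, f (k+1) = f k + 1 ∨ f (k+1) = f k - 1) (hf0 : f 0 = 0)
    {j j' k k' : ℤ} (hj : 0 < j) (hj' : 0 < j') (hne : j ≠ j')
    (hg : IsGreatest {l : ℤ | l < 0 ∧ f l = -j} k)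
    (hg' : IsGreatest {l : ℤ | l < 0 ∧ f l = -j'} k') :
    (k - j) / 2 ≠ (k' - j') / 2 := by
  have hp1 := walk_parity f hstep hf0 k
  have hp2 := walk_parity f hstep hf0 k'
  have e1 : f k = -j := hg.1.2
  have e2 : f k' = -j' := hg'.1.2
  rcases lt_or_gt_of_ne hne with h | h
  · have hkk : k' ≤ k := walk_greatest_mono f hstep hf0 hj h hg hg'
    omega
  · have hkk : k ≤ k' := walk_greatest_mono f hstep hf0 hj' h hg' hg
    omega

lemma hz_step (z : ℤ → Bool) (k : ℤ) : Hz z (k + 1) = Hz z k + bSgn (z k) :=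
  cocycle_succ bSgn z k

lemma hz_pm (z : ℤ → Bool) (k : ℤ) : Hz z (k+1) = Hz z k + 1 ∨ Hz z (k+1) = Hz z k - 1 := by
  have h := hz_step z k
  cases hb : z k <;> rw [hb] at h <;> simp [bSgn] at h <;> omega

lemma hz_zero (z : ℤ → Bool) : Hz z 0 = 0 := cocycle_zero _ _

lemma hc_pm {m : ℕ} (x : ℤ → DA m) (k : ℤ) :
    Hc x (k+1) = Hc x k + 1 ∨ Hc x (k+1) = Hc x k - 1 := by
  have h : Hc x (k + 1) = Hc x k + daSgn (x k) := cocycle_succ daSgn x k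
  rcases hb : x k with i | i <;> rw [hb] at h <;> simp [daSgn] at h <;> omega

lemma hc_zero {m : ℕ} (x : ℤ → DA m) : Hc x 0 = 0 := cocycle_zero _ _

lemma Hc_Fmap (m : ℕ) (z : ℤ → Bool) (a : ℤ → Fin m) : Hc (Fmap m z a) = Hz z := by
  funext i
  have hterm : ∀ j : ℤ, daSgn (Fmap m z a j) = bSgn (z j) := by
    intro j
    unfold Fmap daSgn bSgn
    cases hb : z j <;> simp [hb]
  simp only [Hc, Hz, cocycle, hterm]

lemma gam_eq (z : ℤ → Bool) {k : ℤ} (hk : k < 0) : 2 * gam z k = k + Hz z k := by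
  have h0 : ¬ 0 ≤ k := by omega
  simp only [gam, Hz, cocycle, if_neg h0]
  have hterm : ∀ i ∈ Finset.range (-k).toNat,
      bSgn (z (k + i)) = 2 * (if z (k + (i:ℕ)) then (1:ℤ) else 0) - 1 := by
    intro i _
    by_cases h : z (k + (i:ℕ)) <;> simp [bSgn, h]
  rw [Finset.sum_congr rfl hterm, Finset.sum_sub_distrib, ← Finset.mul_sum]
  simp only [Finset.sum_const, Finset.card_range, nsmul_eq_mul, mul_one]
  have hc : ((-k).toNat : ℤ) = -k := Int.toNat_of_nonneg (by omega)
  rw [hc]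
  ring

lemma Fmap_greatest (m : ℕ) (z : ℤ → Bool) (a : ℤ → Fin m) {j k : ℤ} (hj : 0 < j)
    (hg : IsGreatest {l : ℤ | l < 0 ∧ Hz z l = -j} k) :
    Fmap m z a k = Sum.inl (a ((k - j) / 2)) := by
  have halpha := walk_greatest_alpha (Hz z) (hz_pm z) (hz_zero z) hj hg
  have hs := hz_step z k
  have ht : z k = true := by
    cases hb : z k
    · rw [hb] at hs; simp [bSgn] at hs; omega
    · rfl
  have h2 : 2 * gam z k = k - j := by
    have h3 := gam_eq z hg.1.1
    rw [hg.1.2] at h3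
    omega
  have h4 : gam z k = (k - j) / 2 := by omega
  simp only [Fmap, ht, if_true]
  rw [h4]

instance sumMSC {α β : Type*} [MeasurableSpace α] [MeasurableSpace β]
    [MeasurableSingletonClass α] [MeasurableSingletonClass β] :
    MeasurableSingletonClass (α ⊕ β) := by
  constructor
  rintro (a | b)
  · rw [measurableSet_sum_iff]
    constructor
    · convert MeasurableSet.singleton a using 1; ext x; simp
    · convert MeasurableSet.empty using 1; ext x; simp
  · rw [measurableSet_sum_iff]
    constructor
    · convert MeasurableSet.empty using 1; ext x; simp
    · convert MeasurableSet.singleton b using 1; ext x; simp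

lemma measurable_cocycle_eval {γ : Type*} [MeasurableSpace γ] [Countable γ]
    [MeasurableSingletonClass γ] (s : γ → ℤ) (l : ℤ) :
    Measurable (fun x : ℤ → γ => cocycle s x l) := by
  by_cases h : 0 ≤ l
  · simp only [cocycle, if_pos h]
    exact Finset.measurable_sum _ fun i _ => (measurable_of_countable s).comp (measurable_pi_apply _)
  · simp only [cocycle, if_neg h]
    exact (Finset.measurable_sum _ fun i _ =>
      (measurable_of_countable s).comp (measurable_pi_apply _)).neg

lemma measurableSet_isGreatest_cocycle {γ : Type*} [MeasurableSpace γ] [Countable γ]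
    [MeasurableSingletonClass γ] (s : γ → ℤ) (v k : ℤ) :
    MeasurableSet {x : ℤ → γ | IsGreatest {l : ℤ | l < 0 ∧ cocycle s x l = v} k} := by
  have hset : ∀ (l v' : ℤ), MeasurableSet {x : ℤ → γ | cocycle s x l = v'} := fun l v' =>
    measurable_cocycle_eval s l (measurableSet_singleton v')
  have heq : {x : ℤ → γ | IsGreatest {l : ℤ | l < 0 ∧ cocycle s x l = v} k}
      = ({x : ℤ → γ | k < 0 ∧ cocycle s x k = v} ∩
         ⋂ l : ℤ, {x : ℤ → γ | (l < 0 ∧ cocycle s x l = v) → l ≤ k}) := by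
    ext x
    simp only [Set.mem_setOf_eq, Set.mem_inter_iff, Set.mem_iInter, IsGreatest, upperBounds]

  rw [heq]
  refine MeasurableSet.inter ?_ (MeasurableSet.iInter fun l => ?_)
  · by_cases hk : k < 0
    · have : {x : ℤ → γ | k < 0 ∧ cocycle s x k = v} = {x : ℤ → γ | cocycle s x k = v} := by
        ext x; simp [hk]
      rw [this]; exact hset k v
    · have : {x : ℤ → γ | k < 0 ∧ cocycle s x k = v} = ∅ := by
        ext x; simp [hk]
      rw [this]; exact MeasurableSet.empty
  · by_cases hlk : l ≤ k
    · have : {x : ℤ → γ | (l < 0 ∧ cocycle s x l = v) → l ≤ k} = Set.univ := by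
        ext x; simp [hlk]
      rw [this]; exact MeasurableSet.univ
    · by_cases hl0 : l < 0
      · have : {x : ℤ → γ | (l < 0 ∧ cocycle s x l = v) → l ≤ k}
            = {x : ℤ → γ | cocycle s x l = v}ᶜ := by
          ext x; simp [hl0, hlk]
        rw [this]; exact (hset l v).compl
      · have : {x : ℤ → γ | (l < 0 ∧ cocycle s x l = v) → l ≤ k} = Set.univ := by
          ext x; simp [hl0]
        rw [this]; exact MeasurableSet.univ

lemma measurableSet_isGreatest_Hc (m : ℕ) (v k : ℤ) :
    MeasurableSet {x : ℤ → DA m | IsGreatest {l : ℤ | l < 0 ∧ Hc x l = v} k} :=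
  measurableSet_isGreatest_cocycle daSgn v k

lemma measurableSet_isGreatest_Hz (v k : ℤ) :
    MeasurableSet {z : ℤ → Bool | IsGreatest {l : ℤ | l < 0 ∧ Hz z l = v} k} :=
  measurableSet_isGreatest_cocycle bSgn v k

open MeasureTheory in
lemma unif_bound {m : ℕ} (hm : 2 ≤ m) {μ₂ : Measure (ℤ → Fin m)}
    (h₂ : IsUniformProduct m μ₂) {K : ℕ} (i : Fin K ⊕ Fin K → ℤ)
    (hinj : Function.Injective i) :
    μ₂ {a : ℤ → Fin m | ∀ t : Fin K, a (i (.inl t)) = a (i (.inr t))}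
      ≤ ((m : ENNReal)⁻¹) ^ K := by
  classical
  obtain ⟨hp, hcyl⟩ := h₂
  set s : Finset ℤ := Finset.image i Finset.univ with hsdef
  have hcard : s.card = 2 * K := by
    rw [hsdef, Finset.card_image_of_injective _ hinj, Finset.card_univ]
    simp [Fintype.card_sum]
    omega
  set g : (Fin K → Fin m) → ℤ → Fin m := fun f x =>
    if h : ∃ u : Fin K ⊕ Fin K, i u = x then f (Sum.elim id id h.choose)
    else ⟨0, by omega⟩ with hgdef
  have hg : ∀ (f : Fin K → Fin m) (u : Fin K ⊕ Fin K), g f (i u) = f (Sum.elim id id u) := by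
    intro f u
    have hx : ∃ u' : Fin K ⊕ Fin K, i u' = i u := ⟨u, rfl⟩
    simp only [hgdef]
    rw [dif_pos hx]
    congr 1
    rw [hinj hx.choose_spec]
  have hsubset : {a : ℤ → Fin m | ∀ t : Fin K, a (i (.inl t)) = a (i (.inr t))}
      ⊆ ⋃ f : Fin K → Fin m, {a : ℤ → Fin m | ∀ x ∈ s, a x = g f x} := by
    intro a ha
    refine Set.mem_iUnion.2 ⟨fun t => a (i (.inl t)), ?_⟩
    intro x hx
    obtain ⟨u, -, rfl⟩ := Finset.mem_image.1 hx
    cases u with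
    | inl t => exact (hg (fun t' => a (i (Sum.inl t'))) (Sum.inl t)).symm
    | inr t => exact ((hg (fun t' => a (i (Sum.inl t'))) (Sum.inr t)).trans (ha t)).symm
  have hmne : ((m : ENNReal)) ≠ 0 := by
    simp only [ne_eq, Nat.cast_eq_zero]; omega
  have hmnt : ((m : ENNReal)) ≠ ⊤ := ENNReal.natCast_ne_top m
  calc μ₂ {a : ℤ → Fin m | ∀ t : Fin K, a (i (.inl t)) = a (i (.inr t))}
      ≤ μ₂ (⋃ f : Fin K → Fin m, {a : ℤ → Fin m | ∀ x ∈ s, a x = g f x}) :=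
        measure_mono hsubset
    _ ≤ ∑' f : Fin K → Fin m, μ₂ {a : ℤ → Fin m | ∀ x ∈ s, a x = g f x} :=
        measure_iUnion_le _
    _ = ∑' _f : Fin K → Fin m, ((m : ENNReal)⁻¹) ^ (2 * K) := by
        refine tsum_congr fun f => ?_
        rw [hcyl s (g f), hcard]
    _ = ((m ^ K : ℕ) : ENNReal) * ((m : ENNReal)⁻¹) ^ (2 * K) := by
        rw [tsum_fintype, Finset.sum_const, Finset.card_univ, nsmul_eq_mul]
        congr 2
        simp [Fintype.card_fun]
    _ = ((m : ENNReal)⁻¹) ^ K := by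
        rw [Nat.cast_pow, two_mul, pow_add, ← mul_assoc, ← mul_pow,
          ENNReal.mul_inv_cancel hmne hmnt, one_pow, one_mul]

open MeasureTheory in
/-- `μ̃(A_c^n) = 0` for `c ≠ 0`, where
`A_c^n = {x ∈ B : x_{b_j(x)} = x_{b_{j+c}(x)} ∀ j > n}` and `b_j(x) = max{k < 0 : H_k(x) = -j}`. -/
theorem muTilde_A_c_n_null (m : ℕ) (hm : 2 ≤ m)
    (μ₁ : Measure (ℤ → Bool)) (μ₂ : Measure (ℤ → Fin m))
    (h₁ : IsBernoulliHalf μ₁) (h₂ : IsUniformProduct m μ₂)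
    (c : ℤ) (hc : c ≠ 0) (n : ℕ) :
    muTilde m μ₁ μ₂
      {x | InBmm x ∧ ∀ j : ℤ, (n : ℤ) < j → ∀ k k' : ℤ,
        IsGreatest {l : ℤ | l < 0 ∧ Hc x l = -j} k →
        IsGreatest {l : ℤ | l < 0 ∧ Hc x l = -(j + c)} k' → x k = x k'} = 0 := by
  classical
  obtain ⟨h₁p, -⟩ := h₁
  obtain ⟨h₂p, h₂c⟩ := h₂
  haveI := h₁p
  haveI := h₂p
  set Sset : Set (ℤ → DA m) := {x | InBmm x ∧ ∀ j : ℤ, (n : ℤ) < j → ∀ k k' : ℤ,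
        IsGreatest {l : ℤ | l < 0 ∧ Hc x l = -j} k →
        IsGreatest {l : ℤ | l < 0 ∧ Hc x l = -(j + c)} k' → x k = x k'} with hSdef
  by_cases hF : AEMeasurable (fun p : (ℤ → Bool) × (ℤ → Fin m) => Fmap m p.1 p.2) (μ₁.prod μ₂)
  swap
  · simp [muTilde, Measure.map_of_not_aemeasurable hF]
  suffices hK : ∀ K : ℕ, muTilde m μ₁ μ₂ Sset ≤ ((m : ENNReal)⁻¹) ^ K by
    have hlt1 : (m : ENNReal)⁻¹ < 1 := by
      rw [ENNReal.inv_lt_one]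
      have : ((1 : ℕ) : ENNReal) < ((m : ℕ) : ENNReal) := by exact_mod_cast (by omega : (1:ℕ) < m)
      simpa using this
    have h0 : muTilde m μ₁ μ₂ Sset ≤ 0 :=
      ge_of_tendsto' (ENNReal.tendsto_pow_atTop_nhds_zero_of_lt_one hlt1) hK
    exact le_antisymm h0 zero_le
  intro K
  -- the levels
  have hcabs : 0 ≤ |c| := abs_nonneg c
  have hcle : c ≤ |c| := le_abs_self c
  have hcge : -|c| ≤ c := neg_abs_le c
  set js : ℕ → ℤ := fun t => (n : ℤ) + 1 + |c| + t * (|c| + 1) with hjsdef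
  have hmulnn : ∀ t : ℕ, 0 ≤ (t : ℤ) * (|c| + 1) :=
    fun t => mul_nonneg (Int.natCast_nonneg t) (by omega)
  have hjs_gt : ∀ t : ℕ, (n : ℤ) < js t := by
    intro t; have := hmulnn t; simp only [hjsdef]; omega
  have hjs_pos : ∀ t : ℕ, 0 < js t := by
    intro t
    have h1 := hjs_gt t
    have h2 : (0:ℤ) ≤ (n:ℤ) := Int.natCast_nonneg n
    omega
  have hjsc_pos : ∀ t : ℕ, 0 < js t + c := by
    intro t
    have := hmulnn t
    have h2 : (0:ℤ) ≤ (n:ℤ) := Int.natCast_nonneg n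
    simp only [hjsdef]
    omega
  set lev : Fin K ⊕ Fin K → ℤ := Sum.elim (fun t => js t.val) (fun t => js t.val + c)
    with hlevdef
  have hlev_pos : ∀ u, 0 < lev u := by
    rintro (t | t)
    · exact hjs_pos t.val
    · exact hjsc_pos t.val
  have hmix : ∀ t t' : ℕ, ¬ (js t = js t' + c) := by
    intro t t' h
    have h2 : ((t : ℤ) - t') * (|c| + 1) = c := by
      simp only [hjsdef] at h
      linear_combination h
    rcases eq_or_ne (t : ℤ) (t' : ℤ) with he | hne
    · apply hc
      rw [he] at h2
      linear_combination -h2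
    · have h5 : 1 ≤ |(t : ℤ) - t'| := Int.one_le_abs (sub_ne_zero.2 hne)
      have h3 := abs_mul ((t : ℤ) - t') (|c| + 1)
      rw [h2, abs_of_nonneg (by omega : (0:ℤ) ≤ |c| + 1)] at h3
      nlinarith
  have hjs_inj : ∀ t t' : ℕ, js t = js t' → t = t' := by
    intro t t' h
    have h2 : (t : ℤ) * (|c| + 1) = (t' : ℤ) * (|c| + 1) := by
      simp only [hjsdef] at h
      linarith
    have h3 := mul_right_cancel₀ (by omega : (|c| + 1 : ℤ) ≠ 0) h2
    exact_mod_cast h3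
  have hlev_inj : Function.Injective lev := by
    rintro (t | t) (t' | t') h <;> simp only [hlevdef, Sum.elim_inl, Sum.elim_inr] at h
    · exact congrArg Sum.inl (Fin.eq_of_val_eq (hjs_inj _ _ h))
    · exact absurd h (hmix _ _)
    · exact absurd h.symm (hmix _ _)
    · have : js t.val = js t'.val := by omega
      exact congrArg Sum.inr (Fin.eq_of_val_eq (hjs_inj _ _ this))
  -- the measurable superset T
  set T : Set (ℤ → DA m) :=
    {x | (∀ u : Fin K ⊕ Fin K, ∃ k : ℤ, IsGreatest {l : ℤ | l < 0 ∧ Hc x l = -(lev u)} k) ∧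
      ∀ t : Fin K, ∀ k k' : ℤ, IsGreatest {l : ℤ | l < 0 ∧ Hc x l = -(js t.val)} k →
        IsGreatest {l : ℤ | l < 0 ∧ Hc x l = -(js t.val + c)} k' → x k = x k'} with hTdef
  have hST : Sset ⊆ T := by
    rintro x ⟨hB, hA⟩
    constructor
    · intro u
      exact walk_exists_greatest (Hc x) (hc_pm x) (hc_zero x) hB.2.2 (hlev_pos u)
    · intro t k k' hg hg'
      exact hA (js t.val) (hjs_gt t.val) k k' hg hg'
  have hTm : MeasurableSet T := by
    rw [hTdef, Set.setOf_and]
    apply MeasurableSet.inter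
    · rw [Set.setOf_forall]
      refine MeasurableSet.iInter fun u => ?_
      rw [Set.setOf_exists]
      exact MeasurableSet.iUnion fun k => measurableSet_isGreatest_Hc m _ k
    · rw [Set.setOf_forall]
      refine MeasurableSet.iInter fun t => ?_
      rw [Set.setOf_forall]
      refine MeasurableSet.iInter fun k => ?_
      rw [Set.setOf_forall]
      refine MeasurableSet.iInter fun k' => ?_
      have heq2 : {x : ℤ → DA m | IsGreatest {l : ℤ | l < 0 ∧ Hc x l = -(js t.val)} k →
          IsGreatest {l : ℤ | l < 0 ∧ Hc x l = -(js t.val + c)} k' → x k = x k'}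
          = ({x : ℤ → DA m | IsGreatest {l : ℤ | l < 0 ∧ Hc x l = -(js t.val)} k}ᶜ ∪
            ({x : ℤ → DA m | IsGreatest {l : ℤ | l < 0 ∧ Hc x l = -(js t.val + c)} k'}ᶜ ∪
              {x : ℤ → DA m | x k = x k'})) := by
        ext x
        simp only [Set.mem_setOf_eq, Set.mem_union, Set.mem_compl_iff, Set.mem_setOf_eq]
        tauto
      rw [heq2]
      exact ((measurableSet_isGreatest_Hc m _ k).compl.union
        ((measurableSet_isGreatest_Hc m _ k').compl.union
          (measurableSet_eq_fun (measurable_pi_apply k) (measurable_pi_apply k'))))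
  -- transfer to the product space
  set kk : (Fin K → ℤ × ℤ) → (Fin K ⊕ Fin K) → ℤ :=
    fun φ => Sum.elim (fun t => (φ t).1) (fun t => (φ t).2) with hkkdef
  set Zset : (Fin K → ℤ × ℤ) → Set (ℤ → Bool) :=
    fun φ => {z | ∀ u : Fin K ⊕ Fin K,
      IsGreatest {l : ℤ | l < 0 ∧ Hz z l = -(lev u)} (kk φ u)} with hZdef
  set Aset : (Fin K → ℤ × ℤ) → Set (ℤ → Fin m) :=
    fun φ => {a | ∀ t : Fin K,
      a (((φ t).1 - js t.val) / 2) = a (((φ t).2 - (js t.val + c)) / 2)} with hAdef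
  have hsub : (fun p : (ℤ → Bool) × (ℤ → Fin m) => Fmap m p.1 p.2) ⁻¹' T
      ⊆ ⋃ φ : Fin K → ℤ × ℤ, Zset φ ×ˢ Aset φ := by
    rintro ⟨z, a⟩ hp
    simp only [Set.mem_preimage, hTdef, Set.mem_setOf_eq] at hp
    obtain ⟨hex, heq⟩ := hp
    have hHc : Hc (Fmap m z a) = Hz z := Hc_Fmap m z a
    rw [hHc] at hex
    choose bb hbb using hex
    refine Set.mem_iUnion.2 ⟨fun t => (bb (.inl t), bb (.inr t)), ?_, ?_⟩
    · intro u
      cases u with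
      | inl t => exact hbb (.inl t)
      | inr t => exact hbb (.inr t)
    · intro t
      have hg := hbb (.inl t)
      have hg' := hbb (.inr t)
      have h := heq t (bb (.inl t)) (bb (.inr t)) (by rw [hHc]; exact hg) (by rw [hHc]; exact hg')
      rw [Fmap_greatest m z a (hlev_pos (.inl t)) hg,
        Fmap_greatest m z a (hlev_pos (.inr t)) hg'] at h
      exact Sum.inl.inj h
  have hZm : ∀ φ, MeasurableSet (Zset φ) := by
    intro φ
    simp only [hZdef]
    rw [Set.setOf_forall]
    exact MeasurableSet.iInter fun u => measurableSet_isGreatest_Hz _ _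
  have hdisj : Pairwise (Function.onFun (AEDisjoint μ₁) Zset) := by
    intro φ φ' hne
    refine Disjoint.aedisjoint (Set.disjoint_left.2 ?_)
    intro z hz hz'
    apply hne
    funext t
    have e1 := (hz (.inl t)).unique (hz' (.inl t))
    have e2 := (hz (.inr t)).unique (hz' (.inr t))
    exact Prod.ext e1 e2
  have hbound : ∀ φ, (μ₁.prod μ₂) (Zset φ ×ˢ Aset φ)
      ≤ μ₁ (Zset φ) * ((m : ENNReal)⁻¹) ^ K := by
    intro φ
    rw [Measure.prod_prod]
    rcases Set.eq_empty_or_nonempty (Zset φ) with he | ⟨z, hz⟩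
    · rw [he]; simp
    · have hinj : Function.Injective (fun u : Fin K ⊕ Fin K => (kk φ u - lev u) / 2) := by
        intro u v h
        by_contra hne
        have hlne : lev u ≠ lev v := fun hEq => hne (hlev_inj hEq)
        exact walk_greatest_index_ne (Hz z) (hz_pm z) (hz_zero z)
          (hlev_pos u) (hlev_pos v) hlne (hz u) (hz v) h
      have hb := unif_bound hm ⟨h₂p, h₂c⟩ (fun u : Fin K ⊕ Fin K => (kk φ u - lev u) / 2) hinj
      exact mul_le_mul_right hb _
  calc muTilde m μ₁ μ₂ Sset ≤ muTilde m μ₁ μ₂ T := measure_mono hST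
    _ = (μ₁.prod μ₂) ((fun p : (ℤ → Bool) × (ℤ → Fin m) => Fmap m p.1 p.2) ⁻¹' T) :=
        Measure.map_apply_of_aemeasurable hF hTm
    _ ≤ (μ₁.prod μ₂) (⋃ φ : Fin K → ℤ × ℤ, Zset φ ×ˢ Aset φ) := measure_mono hsub
    _ ≤ ∑' φ : Fin K → ℤ × ℤ, (μ₁.prod μ₂) (Zset φ ×ˢ Aset φ) := measure_iUnion_le _
    _ ≤ ∑' φ : Fin K → ℤ × ℤ, μ₁ (Zset φ) * ((m : ENNReal)⁻¹) ^ K :=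
        ENNReal.tsum_le_tsum hbound
    _ = (∑' φ : Fin K → ℤ × ℤ, μ₁ (Zset φ)) * ((m : ENNReal)⁻¹) ^ K := ENNReal.tsum_mul_right
    _ ≤ 1 * ((m : ENNReal)⁻¹) ^ K := by
        gcongr
        have hle := tsum_measure_le_measure_univ (μ := μ₁)
          (fun φ => (hZm φ).nullMeasurableSet) hdisj
        simpa [measure_univ] using hle
    _ = ((m : ENNReal)⁻¹) ^ K := one_mul _
end

section
/- For every point x of the two-sided Dyck shift in B^{−∞}_{−∞} and every n, the quantities N = min{k ≥ n : H_{k+1}(x) < −2n} and N' = max{k < −n : H_k(x) = H_{N+1}(x)} are well defined, and the word x_{[N', N]} is balanced (≡ 1 mod the Dyck monoid). -/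
open scoped BigOperators

/-! ### Auxiliary lemmas -/

theorem aux_cocycle_step {γ : Type*} (s : γ → ℤ) (x : ℤ → γ) (i : ℤ) :
    cocycle s x (i + 1) = cocycle s x i + s (x i) := by
  rcases le_or_gt 0 i with hi | hi
  · have h1 : (0:ℤ) ≤ i + 1 := by omega
    rw [cocycle, cocycle, if_pos h1, if_pos hi]
    have h2 : (i+1).toNat = i.toNat + 1 := by omega
    rw [h2, Finset.sum_range_succ]
    have h3 : ((i.toNat : ℤ)) = i := Int.toNat_of_nonneg hi
    rw [h3]
  · rcases eq_or_lt_of_le (by omega : i + 1 ≤ 0) with h0 | h0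
    · have hi1 : i = -1 := by omega
      subst hi1
      simp [cocycle]
    · have h1 : ¬ (0:ℤ) ≤ i + 1 := by omega
      rw [cocycle, cocycle, if_neg h1, if_neg (by omega : ¬ (0:ℤ) ≤ i)]
      have hT : (-i).toNat = (-(i+1)).toNat + 1 := by omega
      rw [hT, Finset.sum_range_succ']
      have h4 : ∀ j ∈ Finset.range (-(i+1)).toNat,
          s (x (i + ((j+1 : ℕ) : ℤ))) = s (x (i+1+j)) := by
        intro j _
        have he : i + ((j+1 : ℕ) : ℤ) = i + 1 + j := by push_cast; omega
        rw [he]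
      rw [Finset.sum_congr rfl h4]
      simp

theorem aux_cocycle_lb {γ : Type*} (s : γ → ℤ) (x : ℤ → γ)
    (hs : ∀ g, -1 ≤ s g) (hs' : ∀ g, s g ≤ 1) (i : ℤ) :
    -|i| ≤ cocycle s x i := by
  rw [cocycle]
  split_ifs with h
  · have h2 : ∑ _j ∈ Finset.range i.toNat, (-1 : ℤ) ≤ ∑ j ∈ Finset.range i.toNat, s (x j) :=
      Finset.sum_le_sum fun j _ => hs _
    rw [Finset.sum_const, Finset.card_range, nsmul_eq_mul] at h2
    have h3 : |i| = i := abs_of_nonneg h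
    omega
  · have h2 : ∑ j ∈ Finset.range (-i).toNat, s (x (i + j)) ≤
        ∑ _j ∈ Finset.range (-i).toNat, (1 : ℤ) :=
      Finset.sum_le_sum fun j _ => hs' _
    rw [Finset.sum_const, Finset.card_range, nsmul_eq_mul] at h2
    have h3 : |i| = -i := abs_of_neg (by omega)
    omega

theorem aux_daSgn_le {m : ℕ} (g : DA m) : daSgn g ≤ 1 := by cases g <;> simp [daSgn]
theorem aux_daSgn_ge {m : ℕ} (g : DA m) : -1 ≤ daSgn g := by cases g <;> simp [daSgn]

theorem aux_Hc_step {m : ℕ} (x : ℤ → DA m) (i : ℤ) :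
    Hc x (i + 1) = Hc x i + daSgn (x i) := aux_cocycle_step daSgn x i

theorem aux_Hc_lb {m : ℕ} (x : ℤ → DA m) (i : ℤ) : -|i| ≤ Hc x i :=
  aux_cocycle_lb daSgn x aux_daSgn_ge aux_daSgn_le i

theorem aux_int_ivt (f : ℤ → ℤ) (hstep : ∀ k, f (k+1) ≤ f k + 1) {a b c : ℤ}
    (hab : a ≤ b) (ha : f a ≤ c) (hb : c ≤ f b) : ∃ k, a ≤ k ∧ k ≤ b ∧ f k = c := by
  obtain ⟨k1, ⟨hk1a, hk1b, hk1c⟩, hmin⟩ :=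
    Int.exists_least_of_bdd (P := fun k => a ≤ k ∧ k ≤ b ∧ c ≤ f k)
      ⟨a, fun z hz => hz.1⟩ ⟨b, hab, le_refl _, hb⟩
  rcases eq_or_lt_of_le hk1a with h | h
  · exact ⟨k1, hk1a, hk1b, le_antisymm (h ▸ ha) hk1c⟩
  · have hnot : ¬ (a ≤ k1 - 1 ∧ k1 - 1 ≤ b ∧ c ≤ f (k1 - 1)) := fun hc => by
      have := hmin _ hc; omega
    have h1 : f (k1 - 1) < c := by
      by_contra hc
      exact hnot ⟨by omega, by omega, by omega⟩
    have h2 := hstep (k1 - 1)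
    have h3 : k1 - 1 + 1 = k1 := by ring
    rw [h3] at h2
    exact ⟨k1, hk1a, hk1b, by omega⟩

theorem aux_liminf_atTop (f : ℤ → ℤ)
    (h : Filter.liminf (fun i : ℤ => ((f i : ℝ) : EReal)) Filter.atTop = ⊥) (a C : ℤ) :
    ∃ k, a ≤ k ∧ f k < C := by
  by_contra hc
  push_neg at hc
  have hev : ∀ᶠ i in (Filter.atTop : Filter ℤ), ((C : ℝ) : EReal) ≤ ((f i : ℝ) : EReal) := by
    filter_upwards [Filter.eventually_ge_atTop a] with i hi
    exact_mod_cast (hc i hi)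
  have := Filter.le_liminf_of_le (by isBoundedDefault) hev
  rw [h] at this
  exact (EReal.coe_ne_bot (C : ℝ)) (le_bot_iff.mp this)

theorem aux_liminf_atBot (f : ℤ → ℤ)
    (h : Filter.liminf (fun i : ℤ => ((f i : ℝ) : EReal)) Filter.atBot = ⊥) (a C : ℤ) :
    ∃ k, k ≤ a ∧ f k < C := by
  by_contra hc
  push_neg at hc
  have hev : ∀ᶠ i in (Filter.atBot : Filter ℤ), ((C : ℝ) : EReal) ≤ ((f i : ℝ) : EReal) := by
    filter_upwards [Filter.eventually_le_atBot a] with i hi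
    exact_mod_cast (hc i hi)
  have := Filter.le_liminf_of_le (by isBoundedDefault) hev
  rw [h] at this
  exact (EReal.coe_ne_bot (C : ℝ)) (le_bot_iff.mp this)

theorem aux_wordVal_append {m : ℕ} (a b : List (DA m)) :
    wordVal (a ++ b) = wordVal a * wordVal b := by simp [wordVal]

theorem aux_wordOf_eq {m : ℕ} (x : ℤ → DA m) (a b : ℤ) :
    wordOf x a b = (List.range (b + 1 - a).toNat).map (fun i : ℕ => x (a + (i:ℤ))) := by
  unfold wordOf
  rw [show (do let a ← List.range (b + 1 - a).toNat; pure ((a:ℤ))) =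
      (List.range (b + 1 - a).toNat).flatMap (pure ∘ fun i : ℕ => (i:ℤ)) from rfl,
    List.flatMap_pure_eq_map, List.map_map]
  rfl

theorem aux_wordOf_nil {m : ℕ} (x : ℤ → DA m) {a b : ℤ} (h : b + 1 ≤ a) :
    wordOf x a b = [] := by
  rw [aux_wordOf_eq]
  have : (b + 1 - a).toNat = 0 := by omega
  rw [this]
  rfl

theorem aux_wordOf_single {m : ℕ} (x : ℤ → DA m) (c : ℤ) :
    wordOf x c c = [x c] := by
  rw [aux_wordOf_eq]
  have : (c + 1 - c).toNat = 1 := by omega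
  have h1 : List.range 1 = [0] := rfl
  rw [this, h1]
  norm_num

theorem aux_wordOf_split {m : ℕ} (x : ℤ → DA m) {a c b : ℤ} (h1 : a ≤ c) (h2 : c ≤ b + 1) :
    wordOf x a b = wordOf x a (c - 1) ++ wordOf x c b := by
  rw [aux_wordOf_eq, aux_wordOf_eq, aux_wordOf_eq]
  have key : (b + 1 - a).toNat = (c - 1 + 1 - a).toNat + (b + 1 - c).toNat := by omega
  rw [key, List.range_add, List.map_append, List.map_map]
  congr 1
  apply List.map_congr_left
  intro i _
  simp only [Function.comp_apply]
  congr 1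
  omega

/-- The key combinatorial lemma: a nonzero word whose height path stays at or above its
initial height and returns to it at the end is balanced. -/
theorem aux_balanced {m : ℕ} (x : ℤ → DA m) :
    ∀ L : ℕ, ∀ a b : ℤ, (b + 1 - a).toNat = L →
    (∀ i, a ≤ i → i ≤ b + 1 → Hc x a ≤ Hc x i) →
    Hc x (b + 1) = Hc x a →
    IsNonzeroWord (wordOf x a b) → IsBalancedWord (wordOf x a b) := by
  intro L
  induction L using Nat.strong_induction_on with
  | _ L IH =>
  intro a b hL hge hsum hnz
  by_cases hab : b + 1 ≤ a
  · rw [aux_wordOf_nil x hab]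
    exact (dyckCon m).refl 1
  push_neg at hab
  have hL1 : 1 ≤ L := by omega
  -- first letter is an opening bracket
  have step1 : Hc x (a + 1) = Hc x a + daSgn (x a) := aux_Hc_step x a
  have ha1 : Hc x a ≤ Hc x (a + 1) := hge (a + 1) (by omega) (by omega)
  obtain ⟨j, hj⟩ : ∃ j, x a = Sum.inl j := by
    rcases h : x a with j | j
    · exact ⟨j, rfl⟩
    · rw [h] at step1; simp [daSgn] at step1; omega
  have hHa1 : Hc x (a + 1) = Hc x a + 1 := by rw [step1, hj]; rfl
  -- first return time t
  obtain ⟨t, ⟨hta, htb, htH⟩, htmin⟩ :=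
    Int.exists_least_of_bdd (P := fun i => a + 1 ≤ i ∧ i ≤ b + 1 ∧ Hc x i = Hc x a)
      ⟨a + 1, fun z hz => hz.1⟩ ⟨b + 1, by omega, le_refl _, hsum⟩
  have htpos : ∀ i, a < i → i < t → Hc x a + 1 ≤ Hc x i := by
    intro i hi1 hi2
    have h1 : Hc x a ≤ Hc x i := hge i (by omega) (by omega)
    rcases eq_or_lt_of_le h1 with h | h
    · exfalso
      have := htmin i ⟨by omega, by omega, h.symm⟩
      omega
    · omega
  have hta2 : a + 2 ≤ t := by
    rcases eq_or_lt_of_le hta with h | h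
    · exfalso; rw [← h] at htH; omega
    · omega
  -- last letter before t is a closing bracket
  have step2 : Hc x t = Hc x (t - 1) + daSgn (x (t - 1)) := by
    have := aux_Hc_step x (t - 1)
    have h3 : t - 1 + 1 = t := by ring
    rwa [h3] at this
  have ht1pos : Hc x a + 1 ≤ Hc x (t - 1) := htpos (t - 1) (by omega) (by omega)
  obtain ⟨i0, hi0⟩ : ∃ i0, x (t - 1) = Sum.inr i0 := by
    rcases h : x (t - 1) with i0 | i0
    · rw [h] at step2; simp [daSgn] at step2; omega
    · exact ⟨i0, rfl⟩
  have hHt1 : Hc x (t - 1) = Hc x a + 1 := by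
    rw [hi0] at step2; simp [daSgn] at step2; omega
  -- split the word
  have hsplit1 : wordOf x a b = wordOf x a a ++ wordOf x (a + 1) b := by
    have := aux_wordOf_split x (a := a) (c := a + 1) (b := b) (by omega) (by omega)
    simpa using this
  have hsplit2 : wordOf x (a + 1) b = wordOf x (a + 1) (t - 2) ++ wordOf x (t - 1) b := by
    have := aux_wordOf_split x (a := a + 1) (c := t - 1) (b := b) (by omega) (by omega)
    have h2 : t - 1 - 1 = t - 2 := by ring
    rwa [h2] at this
  have hsplit3 : wordOf x (t - 1) b = wordOf x (t - 1) (t - 1) ++ wordOf x t b := by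
    have := aux_wordOf_split x (a := t - 1) (c := t) (b := b) (by omega) (by omega)
    have h2 : t - 1 = t - 1 := rfl
    simpa using this
  set u := wordOf x (a + 1) (t - 2) with hu_def
  set v := wordOf x t b with hv_def
  have hw : wordOf x a b = [x a] ++ (u ++ ([x (t - 1)] ++ v)) := by
    rw [hsplit1, hsplit2, hsplit3, aux_wordOf_single, aux_wordOf_single]
  set c := dyckCon m with hc_def
  have hwv : wordVal (wordOf x a b)
      = wordVal [x a] * (wordVal u * (wordVal [x (t - 1)] * wordVal v)) := by
    rw [hw, aux_wordVal_append, aux_wordVal_append, aux_wordVal_append]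
  -- nonzeroness of u and v
  have hnz_u : IsNonzeroWord u := by
    intro h0
    apply hnz
    rw [hwv]
    have : c (wordVal [x a] * (wordVal u * (wordVal [x (t - 1)] * wordVal v)))
        (wordVal [x a] * (0 * (wordVal [x (t - 1)] * wordVal v))) :=
      c.mul (c.refl _) (c.mul h0 (c.refl _))
    simpa using this
  -- balancedness of u by induction
  have hu_bal : IsBalancedWord u := by
    apply IH ((t - 2) + 1 - (a + 1)).toNat (by omega) (a + 1) (t - 2) rfl
    · intro i hi1 hi2
      rw [hHa1]
      rcases eq_or_lt_of_le hi2 with h | h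
      · have h2 : i = t - 1 := by omega
        rw [h2, hHt1]
      · exact htpos i (by omega) (by omega)
    · have h2 : t - 2 + 1 = t - 1 := by ring
      rw [h2, hHt1, hHa1]
    · exact hnz_u
  -- reduce: w ≡ [x a, x (t-1)] * v
  have hred : c (wordVal (wordOf x a b)) (wordVal [x a, x (t - 1)] * wordVal v) := by
    rw [hwv]
    have h1 : c (wordVal [x a] * (wordVal u * (wordVal [x (t - 1)] * wordVal v)))
        (wordVal [x a] * (1 * (wordVal [x (t - 1)] * wordVal v))) :=
      c.mul (c.refl _) (c.mul hu_bal (c.refl _))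
    have h2 : wordVal [x a] * (1 * (wordVal [x (t - 1)] * wordVal v))
        = wordVal [x a, x (t - 1)] * wordVal v := by
      rw [one_mul, ← mul_assoc, ← aux_wordVal_append]
      rfl
    rwa [h2] at h1
  -- matching brackets
  have hij : i0 = j := by
    by_contra hne
    apply hnz
    have h0 : c (wordVal [x a, x (t - 1)]) 0 := by
      rw [hj, hi0]
      exact ConGen.Rel.of _ _ (Or.inr ⟨j, i0, fun h => hne h.symm, rfl, rfl⟩)
    have h1 : c (wordVal [x a, x (t - 1)] * wordVal v) (0 * wordVal v) :=
      c.mul h0 (c.refl _)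
    have h2 : (0 : WithZero (FreeMonoid (DA m))) * wordVal v = 0 := zero_mul _
    exact c.trans hred (h2 ▸ h1)
  have hpair : c (wordVal [x a, x (t - 1)]) 1 := by
    rw [hj, hi0, hij]
    exact ConGen.Rel.of _ _ (Or.inl ⟨j, rfl, rfl⟩)
  have hred2 : c (wordVal (wordOf x a b)) (wordVal v) := by
    have h1 : c (wordVal [x a, x (t - 1)] * wordVal v) (1 * wordVal v) :=
      c.mul hpair (c.refl _)
    rw [one_mul] at h1
    exact c.trans hred h1
  -- v is nonzero and balanced
  have hnz_v : IsNonzeroWord v := fun h0 => hnz (c.trans hred2 h0)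
  have hv_bal : IsBalancedWord v := by
    apply IH (b + 1 - t).toNat (by omega) t b rfl
    · intro i hi1 hi2
      rw [htH]
      exact hge i (by omega) hi2
    · rw [htH, hsum]
    · exact hnz_v
  exact c.trans hred2 hv_bal


/-- for `x` in `B^{-∞}_{-∞}` and any `n`, the quantities
`N = min{k ≥ n : H_{k+1}(x) < -2n}` and `N' = max{k < -n : H_k(x) = H_{N+1}(x)}` are well
defined and the word `x_{[N',N]}` is balanced (`≡ 1` mod the Dyck monoid). -/
theorem exists_balanced_window (m : ℕ) (hm : 2 ≤ m) (x : ℤ → DA m)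
    (hx : InDyckShift x)
    (h1 : Filter.liminf (fun i : ℤ => ((Hc x i : ℝ) : EReal)) Filter.atTop = ⊥)
    (h2 : Filter.liminf (fun i : ℤ => ((Hc x i : ℝ) : EReal)) Filter.atBot = ⊥)
    (n : ℕ) :
    ∃ N N' : ℤ,
      IsLeast {k : ℤ | (n : ℤ) ≤ k ∧ Hc x (k + 1) < -(2 * (n : ℤ))} N ∧
      IsGreatest {k : ℤ | k < -(n : ℤ) ∧ Hc x k = Hc x (N + 1)} N' ∧
      IsBalancedWord (wordOf x N' N) := by
  have hstep : ∀ k : ℤ, Hc x (k + 1) ≤ Hc x k + 1 := by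
    intro k
    have := aux_Hc_step x k
    have := aux_daSgn_le (x k)
    omega
  -- existence of N
  obtain ⟨k0, hk0a, hk0b⟩ := aux_liminf_atTop (Hc x) h1 ((n : ℤ) + 1) (-(2 * (n : ℤ)))
  have hk0P : (n : ℤ) ≤ k0 - 1 ∧ Hc x ((k0 - 1) + 1) < -(2 * (n : ℤ)) := by
    constructor
    · omega
    · have h3 : k0 - 1 + 1 = k0 := by ring
      rw [h3]; exact hk0b
  obtain ⟨N, hNP, hNmin⟩ :=
    Int.exists_least_of_bdd (P := fun k => (n : ℤ) ≤ k ∧ Hc x (k + 1) < -(2 * (n : ℤ)))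
      ⟨(n : ℤ), fun z hz => hz.1⟩ ⟨k0 - 1, hk0P⟩
  have hNn : (n : ℤ) ≤ N := hNP.1
  have hNh : Hc x (N + 1) < -(2 * (n : ℤ)) := hNP.2
  set h := Hc x (N + 1) with hh_def
  -- existence of N'
  have hHmn : h < Hc x (-(n : ℤ)) := by
    have := aux_Hc_lb x (-(n : ℤ))
    have habs : |(-(n : ℤ))| = (n : ℤ) := by
      rw [abs_neg]; exact abs_of_nonneg (by positivity)
    omega
  obtain ⟨k1, hk1a, hk1b⟩ := aux_liminf_atBot (Hc x) h2 (-(n : ℤ) - 1) h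
  obtain ⟨k2, hk2a, hk2b, hk2c⟩ :=
    aux_int_ivt (Hc x) hstep (a := k1) (b := -(n : ℤ)) (c := h) (by omega) (le_of_lt hk1b)
      (le_of_lt hHmn)
  have hk2lt : k2 < -(n : ℤ) := by
    rcases eq_or_lt_of_le hk2b with hE | hE
    · exfalso; rw [hE] at hk2c; omega
    · exact hE
  obtain ⟨N', hN'P, hN'max⟩ :=
    Int.exists_greatest_of_bdd (P := fun k => k < -(n : ℤ) ∧ Hc x k = h)
      ⟨-(n : ℤ), fun z hz => le_of_lt hz.1⟩ ⟨k2, hk2lt, hk2c⟩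
  have hN'n : N' < -(n : ℤ) := hN'P.1
  have hN'H : Hc x N' = h := hN'P.2
  -- the height stays above h on [N', N+1]
  have hge : ∀ i, N' ≤ i → i ≤ N + 1 → Hc x N' ≤ Hc x i := by
    intro i hi1 hi2
    rw [hN'H]
    rcases le_or_gt i (-(n : ℤ)) with hc1 | hc1
    · -- left part
      by_contra hlt
      push_neg at hlt
      have hiN' : N' < i := by
        rcases eq_or_lt_of_le hi1 with hE | hE
        · exfalso; rw [← hE] at hlt; omega
        · exact hE
      obtain ⟨k3, hk3a, hk3b, hk3c⟩ :=
        aux_int_ivt (Hc x) hstep (a := i) (b := -(n : ℤ)) (c := h) hc1 (by omega)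
          (le_of_lt hHmn)
      have hk3lt : k3 < -(n : ℤ) := by
        rcases eq_or_lt_of_le hk3b with hE | hE
        · exfalso; rw [hE] at hk3c; omega
        · exact hE
      have := hN'max k3 ⟨hk3lt, hk3c⟩
      omega
    · rcases le_or_gt i ((n : ℤ) + 1) with hc2 | hc2
      · -- middle part
        have hlb := aux_Hc_lb x i
        have habs : |i| ≤ (n : ℤ) + 1 := by
          rw [abs_le]; omega
        omega
      · rcases eq_or_lt_of_le hi2 with hE | hE
        · rw [hE]
        · -- right part: n + 1 ≤ i ≤ N
          have hnotP : ¬ ((n : ℤ) ≤ i - 1 ∧ Hc x ((i - 1) + 1) < -(2 * (n : ℤ))) := by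
            intro hP
            have := hNmin _ hP
            omega
          have h3 : i - 1 + 1 = i := by ring
          rw [h3] at hnotP
          have : ¬ Hc x i < -(2 * (n : ℤ)) := fun hc => hnotP ⟨by omega, hc⟩
          omega
  refine ⟨N, N', ⟨hNP, fun z hz => hNmin z hz⟩, ⟨hN'P, fun z hz => hN'max z hz⟩, ?_⟩
  apply aux_balanced x ((N + 1 - N').toNat) N' N rfl hge
  · rw [hN'H]
  · exact hx N' N (by omega)
end
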